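/- arXiv:2403.11976 — 3 statements merged into one kernel-verified Lean document; each statement's English description precedes it below -/
import Mathlib

section
/- Let p be a partition of 2n and x a positive integer such that p has at least one part equal to 2x. Then p_C = (p_{>2x} ⊔ p_{<2x})_C ⊔ p_{=2x}. -/
open Multiset

/-- The parts of a partition, listed in non-increasing order. -/
def sortedD (p : Multiset ℕ) : List ℕ := (p.sort (· ≤ ·)).reverse

/-- `p` is a partition of `n`: all parts are positive and they sum to `n`. -/
def IsPartitionOf (p : Multiset ℕ) (n : ℕ) : Prop :=
  (∀ x ∈ p, 0 < x) ∧ p.sum = n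

/-- Dominance order on partitions: `Dom p q` means `p ≥ q`, i.e. for every `k`
the sum of the `k` largest parts of `p` is at least that of `q`. -/
def Dom (p q : Multiset ℕ) : Prop :=
  ∀ k : ℕ, ((sortedD q).take k).sum ≤ ((sortedD p).take k).sum

/-- Strict dominance: `p > q`. -/
def SDom (p q : Multiset ℕ) : Prop := Dom p q ∧ p ≠ q

/-- Types of partitions. -/
inductive PType | B | C | D
  deriving DecidableEq

/-- A partition (of odd size) is of type `B` if every even part occurs with even
multiplicity; a partition (of even size) is of type `C` if every odd part occurs with
even multiplicity, and of type `D` if every even part occurs with even multiplicity. -/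
def OfType : PType → Multiset ℕ → Prop
  | .B, p => ∀ x, Even x → Even (p.count x)
  | .C, p => ∀ x, Odd x → Even (p.count x)
  | .D, p => ∀ x, Even x → Even (p.count x)

/-- Componentwise sum of two lists (the shorter one padded with zeros). -/
def addLists : List ℕ → List ℕ → List ℕ
  | [], l => l
  | a :: l, [] => a :: l
  | a :: l, b :: m => (a + b) :: addLists l m

/-- Componentwise sum `p + q` of two partitions. -/
def cwAdd (p q : Multiset ℕ) : Multiset ℕ := ↑(addLists (sortedD p) (sortedD q))

/-- The rectangular partition `[b^m]` with `m` parts equal to `b`. -/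
def rect (b m : ℕ) : Multiset ℕ := Multiset.replicate m b

/-- `p⁺`: add `1` to the largest part (`[1]` if `p` is empty). -/
def plusOp (p : Multiset ℕ) : Multiset ℕ :=
  match sortedD p with
  | [] => {1}
  | a :: l => (a + 1) ::ₘ ↑l

/-- `p⁻`: subtract `1` from the smallest part, discarding it if it becomes `0`. -/
def minusOp (p : Multiset ℕ) : Multiset ℕ :=
  match p.sort (· ≤ ·) with
  | [] => 0
  | a :: l => if a = 1 then ↑l else (a - 1) ::ₘ ↑l

/-- The largest part of a partition (`0` if empty). -/
def maxPart (p : Multiset ℕ) : ℕ := (sortedD p).headI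

/-- The transpose (conjugate) partition: the `i`-th part of `p^*` is the number of
parts of `p` that are `≥ i`. -/
def transposeP (p : Multiset ℕ) : Multiset ℕ :=
  ↑((List.range (maxPart p)).map fun i => Multiset.card (p.filter fun x => i + 1 ≤ x))

/-- `q` is the `X`-collapse of `p`: the greatest partition of type `X` (of the same
size) dominated by `p` in the dominance order. -/
def IsCollapse (X : PType) (p q : Multiset ℕ) : Prop :=
  IsPartitionOf q p.sum ∧ OfType X q ∧ Dom p q ∧
    ∀ r : Multiset ℕ, IsPartitionOf r p.sum → OfType X r → Dom p r → Dom q r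

/-- The `X`-collapse of `p` (junk value if it does not exist). -/
noncomputable def collapse (X : PType) (p : Multiset ℕ) : Multiset ℕ :=
  letI := Classical.propDecidable (∃ q, IsCollapse X p q)
  if h : ∃ q, IsCollapse X p q then h.choose else 0

/-- Barbasch–Vogan duality for partitions of type `B`: `d_BV(p) = ((p^-)_C)^*`. -/
noncomputable def dBV_B (p : Multiset ℕ) : Multiset ℕ :=
  transposeP (collapse .C (minusOp p))

/-- Barbasch–Vogan duality for partitions of type `C`: `d_BV(p) = ((p^+)_B)^*`. -/
noncomputable def dBV_C (p : Multiset ℕ) : Multiset ℕ :=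
  transposeP (collapse .B (plusOp p))

/-- Barbasch–Vogan duality for partitions of type `D`: `d_BV(p) = (p^*)_D`. -/
noncomputable def dBV_D (p : Multiset ℕ) : Multiset ℕ :=
  collapse .D (transposeP p)

namespace Work

/-- prefix sums -/
def S (p : Multiset ℕ) (k : ℕ) : ℕ := ((sortedD p).take k).sum

/-- k-th largest part (0-indexed), 0 if out of range -/
def pt (p : Multiset ℕ) (k : ℕ) : ℕ := (sortedD p).getD k 0

lemma sortedD_sorted (p : Multiset ℕ) : (sortedD p).Pairwise (· ≥ ·) := by
  unfold sortedD
  have h := Multiset.pairwise_sort p (· ≤ ·)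
  rw [List.pairwise_reverse]
  exact h.imp (fun {a b} hab => hab)

lemma coe_sortedD (p : Multiset ℕ) : (↑(sortedD p) : Multiset ℕ) = p := by
  unfold sortedD
  rw [Multiset.coe_reverse, Multiset.sort_eq]

lemma mem_sortedD {p : Multiset ℕ} {a : ℕ} : a ∈ sortedD p ↔ a ∈ p := by
  rw [← Multiset.mem_coe, coe_sortedD]

lemma length_sortedD (p : Multiset ℕ) : (sortedD p).length = Multiset.card p := by
  rw [← Multiset.coe_card, coe_sortedD]

lemma sortedD_eq {p : Multiset ℕ} {l : List ℕ} (hs : l.Pairwise (· ≥ ·))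
    (hc : (↑l : Multiset ℕ) = p) : sortedD p = l := by
  apply List.Perm.eq_of_pairwise (fun a b _ _ h1 h2 => le_antisymm h2 h1) (sortedD_sorted p) hs
  rw [← Multiset.coe_eq_coe, coe_sortedD, hc]

lemma sorted_rel {l : List ℕ} (hl : l.Pairwise (· ≥ ·)) {i j : ℕ} (hij : i ≤ j)
    (hj : j < l.length) : l.getD j 0 ≤ l.getD i 0 := by
  rcases eq_or_lt_of_le hij with rfl | h
  · exact le_refl _
  · rw [List.getD_eq_getElem _ _ hj, List.getD_eq_getElem _ _ (lt_trans h hj)]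
    exact List.pairwise_iff_getElem.1 hl i j _ _ h

/-- antitone getD with 0 padding -/
lemma sorted_getD_anti {l : List ℕ} (hl : l.Pairwise (· ≥ ·)) {i j : ℕ} (hij : i ≤ j) :
    l.getD j 0 ≤ l.getD i 0 := by
  by_cases hj : j < l.length
  · exact sorted_rel hl hij hj
  · rw [List.getD_eq_default _ _ (le_of_not_gt hj)]
    exact Nat.zero_le _

lemma pt_anti (p : Multiset ℕ) {i j : ℕ} (hij : i ≤ j) : pt p j ≤ pt p i :=
  sorted_getD_anti (sortedD_sorted p) hij

lemma S_succ (p : Multiset ℕ) (k : ℕ) : S p (k + 1) = S p k + pt p k := by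
  unfold S pt
  by_cases hk : k < (sortedD p).length
  · rw [List.take_succ, List.sum_append, List.getD_eq_getElem _ _ hk]
    simp [List.getElem?_eq_getElem hk]
  · push_neg at hk
    rw [List.take_of_length_le hk, List.take_of_length_le (le_trans hk (Nat.le_succ k)),
      List.getD_eq_default _ _ hk]
    omega

lemma S_mono (p : Multiset ℕ) {k k' : ℕ} (h : k ≤ k') : S p k ≤ S p k' := by
  induction k' with
  | zero => simp_all
  | succ n ih =>
    rcases Nat.lt_or_ge k (n+1) with h' | h'
    · exact le_trans (ih (Nat.lt_succ_iff.1 h')) (by rw [S_succ]; omega)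
    · have : k = n + 1 := le_antisymm h h'
      rw [this]

lemma S_of_card_le (p : Multiset ℕ) {k : ℕ} (h : Multiset.card p ≤ k) : S p k = p.sum := by
  unfold S
  rw [List.take_of_length_le (by rw [length_sortedD]; exact h)]
  rw [← Multiset.sum_coe, coe_sortedD]

lemma Dom_iff {p q : Multiset ℕ} : Dom p q ↔ ∀ k, S q k ≤ S p k := Iff.rfl

lemma Dom_refl (p : Multiset ℕ) : Dom p p := fun _ => le_refl _

lemma Dom_trans {p q r : Multiset ℕ} (h1 : Dom p q) (h2 : Dom q r) : Dom p r :=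
  fun k => le_trans (h2 k) (h1 k)

end Work

namespace Work

def cnt (P : ℕ → Prop) [DecidablePred P] (p : Multiset ℕ) : ℕ :=
  Multiset.card (p.filter P)

section FILT
variable {P : ℕ → Prop} [DecidablePred P]

lemma filter_prefix (hmono : ∀ a b, a ≤ b → P a → P b) :
    ∀ {l : List ℕ}, l.Pairwise (· ≥ ·) →
      l.filter (fun a => decide (P a)) = l.take ((l.filter (fun a => decide (P a))).length)
  | [], _ => by simp
  | a :: l, hl => by
    have hl' : l.Pairwise (· ≥ ·) := hl.of_cons
    have hall : ∀ b ∈ l, b ≤ a := fun b hb => List.rel_of_pairwise_cons hl hb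
    by_cases hPa : P a
    · simp only [List.filter_cons, hPa, if_true, decide_eq_true_eq]
      simp only [List.length_cons, List.take_succ_cons]
      rw [← filter_prefix hmono hl']
    · have hfl : l.filter (fun a => decide (P a)) = [] := by
        rw [List.filter_eq_nil_iff]
        intro b hb hPb
        exact hPa (hmono b a (hall b hb) (of_decide_eq_true hPb))
      simp [List.filter_cons, hPa, hfl]

lemma cnt_eq_length (p : Multiset ℕ) :
    cnt P p = ((sortedD p).filter (fun a => decide (P a))).length := by
  unfold cnt
  conv_lhs => rw [← coe_sortedD p]
  rw [Multiset.filter_coe, Multiset.coe_card]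

lemma take_cnt (hmono : ∀ a b, a ≤ b → P a → P b) (p : Multiset ℕ) :
    (sortedD p).take (cnt P p) = (sortedD p).filter (fun a => decide (P a)) := by
  rw [cnt_eq_length p, ← filter_prefix hmono (sortedD_sorted p)]

lemma S_cnt (hmono : ∀ a b, a ≤ b → P a → P b) (p : Multiset ℕ) :
    S p (cnt P p) = (p.filter P).sum := by
  unfold S
  rw [take_cnt hmono p, ← Multiset.sum_coe, ← Multiset.filter_coe, coe_sortedD]

lemma cnt_le_card (p : Multiset ℕ) : cnt P p ≤ Multiset.card p := by
  unfold cnt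
  exact Multiset.card_le_card (Multiset.filter_le _ p)

lemma pt_of_lt_cnt (hmono : ∀ a b, a ≤ b → P a → P b) {p : Multiset ℕ} {k : ℕ}
    (hk : k < cnt P p) : P (pt p k) := by
  have hkl : k < (sortedD p).length := by
    rw [length_sortedD]; exact lt_of_lt_of_le hk (cnt_le_card p)
  have hkt : k < ((sortedD p).take (cnt P p)).length := by
    rw [List.length_take]; omega
  have hmem : (sortedD p)[k] ∈ (sortedD p).take (cnt P p) := by
    rw [← List.getElem_take (h := hkt)]
    exact List.getElem_mem _
  rw [take_cnt hmono p] at hmem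
  have := List.of_mem_filter hmem
  rw [pt, List.getD_eq_getElem _ _ hkl]
  exact of_decide_eq_true this

lemma not_pt_of_cnt_le (hmono : ∀ a b, a ≤ b → P a → P b) (h0 : ¬ P 0)
    {p : Multiset ℕ} {k : ℕ} (hk : cnt P p ≤ k) : ¬ P (pt p k) := by
  set l := sortedD p with hldef
  by_cases hkl : k < l.length
  · intro hP
    rw [pt, List.getD_eq_getElem _ _ hkl] at hP
    have htake : (l.take (k+1)).filter (fun a => decide (P a)) = l.take (k+1) := by
      rw [List.filter_eq_self]
      intro b hb
      rcases List.mem_iff_getElem.1 hb with ⟨i, hi, hbi⟩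
      have hil : i < l.length := by
        have := hi; rw [List.length_take] at this; omega
      have hik : i ≤ k := by
        have := hi; rw [List.length_take] at this; omega
      have hble : l[k] ≤ b := by
        subst hbi
        rw [List.getElem_take]
        have h2 := sorted_rel (hldef ▸ sortedD_sorted p) hik hkl
        rwa [List.getD_eq_getElem _ _ hkl, List.getD_eq_getElem _ _ hil] at h2
      exact decide_eq_true (hmono _ _ hble hP)
    have hcl : cnt P p = (l.filter (fun a => decide (P a))).length := cnt_eq_length p
    have hsplit : l.filter (fun a => decide (P a)) =
        (l.take (k+1)).filter (fun a => decide (P a)) ++ (l.drop (k+1)).filter (fun a => decide (P a)) := by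
      rw [← List.filter_append, List.take_append_drop]
    rw [hsplit, List.length_append, htake] at hcl
    have hlen : (l.take (k+1)).length = k+1 := by rw [List.length_take]; omega
    omega
  · rw [pt, List.getD_eq_default _ _ (le_of_not_gt hkl)]
    exact h0

end FILT

lemma pt_cnt_pred {p : Multiset ℕ} {v : ℕ} (hv : v ∈ p) :
    pt p (cnt (v ≤ ·) p - 1) = v := by
  have hmono : ∀ a b : ℕ, a ≤ b → v ≤ a → v ≤ b := fun a b hab ha => le_trans ha hab
  have hn1 : 1 ≤ cnt (v ≤ ·) p := by
    rw [cnt]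
    rw [Nat.succ_le_iff, Multiset.card_pos]
    intro h
    have : v ∈ p.filter (v ≤ ·) := Multiset.mem_filter.2 ⟨hv, le_refl v⟩
    rw [h] at this
    simp at this
  set n := cnt (v ≤ ·) p with hn
  have hge : v ≤ pt p (n - 1) := pt_of_lt_cnt (P := (v ≤ ·)) hmono (by omega)
  have hle : pt p (n - 1) ≤ v := by
    have hvl : v ∈ sortedD p := mem_sortedD.2 hv
    have hvt : v ∈ (sortedD p).take n := by
      rw [take_cnt hmono p]
      exact List.mem_filter.2 ⟨hvl, by simp⟩
    rcases List.mem_iff_getElem.1 hvt with ⟨i, hi, hvi⟩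
    have hil : i < (sortedD p).length := by
      have := hi; rw [List.length_take] at this; omega
    have hin : i ≤ n - 1 := by
      have := hi; rw [List.length_take] at this; omega
    have hnl : n - 1 < (sortedD p).length := by
      have : n ≤ (sortedD p).length := by rw [length_sortedD]; exact cnt_le_card p
      omega
    have h2 := sorted_rel (sortedD_sorted p) hin hnl
    rw [List.getD_eq_getElem _ _ hnl, List.getD_eq_getElem _ _ hil] at h2
    rw [← List.getElem_take (h := hi)] at h2
    rw [hvi] at h2
    rw [pt, List.getD_eq_getElem _ _ hnl]
    exact h2
  omega

end Work

namespace Work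

lemma card_le_sum_pos {p : Multiset ℕ} (hpos : ∀ y ∈ p, 0 < y) : Multiset.card p ≤ p.sum := by
  induction p using Multiset.induction_on with
  | empty => simp
  | cons a s ih =>
    simp only [Multiset.card_cons, Multiset.sum_cons]
    have ha : 0 < a := hpos a (Multiset.mem_cons_self a s)
    have := ih (fun y hy => hpos y (Multiset.mem_cons_of_mem hy))
    omega

lemma even_sum_of_counts {m : Multiset ℕ} (h : ∀ v, Odd v → Even (m.count v)) :
    Even m.sum := by
  induction m using Multiset.strongInductionOn with
  | _ m ih =>
    by_cases hm : m = 0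
    · simp [hm]
    rcases Multiset.exists_mem_of_ne_zero hm with ⟨a, ha⟩
    have hsplit : m = Multiset.replicate (m.count a) a + m.filter (· ≠ a) := by
      ext b
      rw [Multiset.count_add, Multiset.count_replicate, Multiset.count_filter]
      by_cases hb : b = a
      · subst hb; simp
      · rw [if_neg (fun h : a = b => hb h.symm), if_pos hb]; omega
    have hlt : m.filter (· ≠ a) < m := by
      apply lt_of_le_of_ne (Multiset.filter_le _ m)
      intro heq
      have : a ∈ m.filter (· ≠ a) := heq.symm ▸ ha
      simp [Multiset.mem_filter] at this
    have hcounts : ∀ v, Odd v → Even ((m.filter (· ≠ a)).count v) := by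
      intro v hv
      rw [Multiset.count_filter]
      by_cases hva : v = a <;> simp [hva, h v hv]
    have heven2 := ih _ hlt hcounts
    have : m.sum = m.count a * a + (m.filter (· ≠ a)).sum := by
      conv_lhs => rw [hsplit]
      rw [Multiset.sum_add, Multiset.sum_replicate, smul_eq_mul]
    rw [this]
    have hea : Even (m.count a * a) := by
      rcases Nat.even_or_odd a with hae | hao
      · exact hae.mul_left _
      · exact (h a hao).mul_right _
    exact hea.add heven2

lemma odd_filter_sum {p : Multiset ℕ} {v : ℕ} (hvodd : Odd v)
    (hcnt : Odd (p.count v)) (hlarger : ∀ u, Odd u → v < u → Even (p.count u)) :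
    Odd ((p.filter (v ≤ ·)).sum) := by
  have hsplit : p.filter (v ≤ ·) = p.filter (v < ·) + Multiset.replicate (p.count v) v := by
    ext b
    rw [Multiset.count_add, Multiset.count_replicate, Multiset.count_filter,
      Multiset.count_filter]
    by_cases hbv : b = v
    · subst hbv
      rw [if_pos (le_refl b), if_neg (lt_irrefl b), if_pos rfl]
      omega
    · rw [if_neg (fun h : v = b => hbv h.symm)]
      by_cases hvb : v ≤ b
      · have hlt : v < b := lt_of_le_of_ne hvb (fun h => hbv h.symm)
        rw [if_pos hvb, if_pos hlt]; omega
      · rw [if_neg hvb, if_neg (fun h : v < b => hvb (le_of_lt h))]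
  rw [hsplit, Multiset.sum_add, Multiset.sum_replicate, smul_eq_mul]
  have he : Even ((p.filter (v < ·)).sum) := by
    apply even_sum_of_counts
    intro u hu
    rw [Multiset.count_filter]
    by_cases hvu : v < u
    · simp [hvu, hlarger u hu hvu]
    · simp [hvu]
  have ho : Odd (p.count v * v) := hcnt.mul hvodd
  rcases he with ⟨e, he⟩
  rcases ho with ⟨o, ho⟩
  exact ⟨e + o, by omega⟩

lemma even_S_corner {r : Multiset ℕ} (hC : ∀ v, Odd v → Even (r.count v)) {k : ℕ}
    (hk1 : 1 ≤ k) (hcorner : pt r k < pt r (k - 1)) : Even (S r k) := by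
  set t := pt r k with ht
  have hmono : ∀ a b : ℕ, a ≤ b → t + 1 ≤ a → t + 1 ≤ b := fun a b hab ha => le_trans ha hab
  have h0 : ¬ (t + 1 ≤ 0) := by omega
  have hn : cnt (t + 1 ≤ ·) r = k := by
    rcases lt_trichotomy (cnt (t + 1 ≤ ·) r) k with h | h | h
    · exfalso
      have := not_pt_of_cnt_le (P := (t + 1 ≤ ·)) hmono h0 (p := r) (k := k - 1) (by omega)
      omega
    · exact h
    · exfalso
      have := pt_of_lt_cnt (P := (t + 1 ≤ ·)) hmono (p := r) (k := k) h
      omega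
  have : S r k = (r.filter (t + 1 ≤ ·)).sum := by
    rw [← hn]; exact S_cnt hmono r
  rw [this]
  apply even_sum_of_counts
  intro u hu
  rw [Multiset.count_filter]
  by_cases htu : t + 1 ≤ u
  · simp [htu, hC u hu]
  · simp [htu]

lemma cnt_mono_le {P : ℕ → Prop} [DecidablePred P] {s m : Multiset ℕ} (h : s ≤ m) :
    cnt P s ≤ cnt P m := by
  unfold cnt
  exact Multiset.card_le_card (Multiset.filter_le_filter _ h)

lemma pt_le_of_le {s m : Multiset ℕ} (h : s ≤ m) (k : ℕ) : pt s k ≤ pt m k := by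
  by_contra hc
  push_neg at hc
  set t := pt m k with ht
  have hmono : ∀ a b : ℕ, a ≤ b → t + 1 ≤ a → t + 1 ≤ b := fun a b hab ha => le_trans ha hab
  have h0 : ¬ (t + 1 ≤ 0) := by omega
  have h1 : k < cnt (t + 1 ≤ ·) s := by
    by_contra h2
    push_neg at h2
    have := not_pt_of_cnt_le (P := (t + 1 ≤ ·)) hmono h0 h2
    omega
  have h2 : cnt (t + 1 ≤ ·) m ≤ k := by
    by_contra h3
    push_neg at h3
    have := pt_of_lt_cnt (P := (t + 1 ≤ ·)) hmono h3
    omega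
  have := cnt_mono_le (P := (t + 1 ≤ ·)) h
  omega

lemma S_eq_sum_pt (p : Multiset ℕ) (k : ℕ) : S p k = ∑ i ∈ Finset.range k, pt p i := by
  induction k with
  | zero => simp [S]
  | succ n ih => rw [S_succ, Finset.sum_range_succ, ih]

lemma S_le_of_le {s m : Multiset ℕ} (h : s ≤ m) (k : ℕ) : S s k ≤ S m k := by
  rw [S_eq_sum_pt, S_eq_sum_pt]
  exact Finset.sum_le_sum (fun i _ => pt_le_of_le h i)

lemma pt_pos_iff {p : Multiset ℕ} (hpos : ∀ y ∈ p, 0 < y) {k : ℕ} :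
    0 < pt p k ↔ k < Multiset.card p := by
  constructor
  · intro h
    by_contra hc
    push_neg at hc
    rw [pt, List.getD_eq_default _ _ (by rw [length_sortedD]; exact hc)] at h
    omega
  · intro h
    have hk : k < (sortedD p).length := by rw [length_sortedD]; exact h
    rw [pt, List.getD_eq_getElem _ _ hk]
    exact hpos _ (mem_sortedD.1 (List.getElem_mem _))

lemma eq_of_S_eq {q q' : Multiset ℕ} (hq : ∀ y ∈ q, 0 < y) (hq' : ∀ y ∈ q', 0 < y)
    (h : ∀ k, S q k = S q' k) : q = q' := by
  have hpt : ∀ k, pt q k = pt q' k := by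
    intro k
    have h1 := h k
    have h2 := h (k + 1)
    rw [S_succ, S_succ] at h2
    omega
  have hcard : Multiset.card q = Multiset.card q' := by
    by_contra hc
    rcases Nat.lt_or_ge (Multiset.card q) (Multiset.card q') with hlt | hge
    · have h1 : pt q (Multiset.card q) = 0 := by
        rw [pt, List.getD_eq_default _ _ (by rw [length_sortedD])]
      have h2 : 0 < pt q' (Multiset.card q) := (pt_pos_iff hq').2 hlt
      rw [hpt] at h1; omega
    · have hlt : Multiset.card q' < Multiset.card q := by omega
      have h1 : pt q' (Multiset.card q') = 0 := by
        rw [pt, List.getD_eq_default _ _ (by rw [length_sortedD])]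
      have h2 : 0 < pt q (Multiset.card q') := (pt_pos_iff hq).2 hlt
      rw [hpt] at h2; omega
  have hlen : (sortedD q).length = (sortedD q').length := by
    rw [length_sortedD, length_sortedD, hcard]
  have : sortedD q = sortedD q' := by
    apply List.ext_getElem hlen
    intro i h1 h2
    have := hpt i
    rwa [pt, pt, List.getD_eq_getElem _ _ h1, List.getD_eq_getElem _ _ h2] at this
  rw [← coe_sortedD q, ← coe_sortedD q', this]

/-- termination measure -/
def mu (p : Multiset ℕ) : ℕ := ∑ k ∈ Finset.range (p.sum + 1), S p k

lemma mu_lt_of_dom {p q : Multiset ℕ} (hsum : q.sum = p.sum)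
    (hle : ∀ k, S q k ≤ S p k) {k0 : ℕ} (hk0 : k0 ≤ p.sum) (hstrict : S q k0 < S p k0) :
    mu q < mu p := by
  unfold mu
  rw [hsum]
  apply Finset.sum_lt_sum
  · exact fun i _ => hle i
  · exact ⟨k0, Finset.mem_range.2 (by omega), hstrict⟩

lemma mu_lt_of_lt {s p : Multiset ℕ} (hpos : ∀ y ∈ p, 0 < y) (hle : s ≤ p) (hne : s ≠ p) :
    mu s < mu p := by
  rcases Multiset.le_iff_exists_add.1 hle with ⟨t, rfl⟩
  have ht : t ≠ 0 := by
    intro h; rw [h] at hne; simp at hne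
  rcases Multiset.exists_mem_of_ne_zero ht with ⟨a, ha⟩
  have hapos : 0 < a := hpos a (Multiset.mem_add.2 (Or.inr ha))
  have hsum : s.sum < (s + t).sum := by
    rw [Multiset.sum_add]
    have : a ≤ t.sum := Multiset.single_le_sum (fun y _ => Nat.zero_le y) a ha
    omega
  unfold mu
  calc ∑ k ∈ Finset.range (s.sum + 1), S s k
      ≤ ∑ k ∈ Finset.range (s.sum + 1), S (s + t) k :=
        Finset.sum_le_sum (fun i _ => S_le_of_le (Multiset.le_add_right s t) i)
    _ < ∑ k ∈ Finset.range ((s + t).sum + 1), S (s + t) k := by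
        have hsub : Finset.range (s.sum + 1) ⊆ Finset.range ((s + t).sum + 1) := by
          intro x hx; simp at hx ⊢; omega
        have hmem : (s + t).sum ∈ Finset.range ((s + t).sum + 1) := by simp
        have hnmem : (s + t).sum ∉ Finset.range (s.sum + 1) := by
          simp only [Finset.mem_range, Multiset.sum_add, not_lt] at hsum ⊢
          omega
        have hposS : 0 < S (s + t) ((s + t).sum) := by
          have hcard : Multiset.card (s + t) ≤ (s + t).sum := card_le_sum_pos hpos
          rw [S_of_card_le _ hcard]
          omega
        exact Finset.sum_lt_sum_of_subset hsub hmem hnmem hposS (fun j _ _ => Nat.zero_le _)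

end Work

namespace Work

lemma sum_take_append_cons_le {A B : List ℕ} {a k : ℕ} (hk : k ≤ A.length) :
    ((A ++ a :: B).take k).sum = (A.take k).sum := by
  rw [List.take_append]
  have : k - A.length = 0 := by omega
  rw [this]
  simp

lemma sum_take_append_cons_gt {A B : List ℕ} {a k : ℕ} (hk : A.length < k) :
    ((A ++ a :: B).take k).sum = A.sum + a + ((B.take (k - A.length - 1)).sum) := by
  rw [List.take_append, List.sum_append,
    List.take_of_length_le (by omega : A.length ≤ k)]
  have h2 : k - A.length = (k - A.length - 1) + 1 := by omega
  conv_lhs => rw [h2, List.take_succ_cons, List.sum_cons]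
  omega

lemma cnt_imp_le {P Q : ℕ → Prop} [DecidablePred P] [DecidablePred Q]
    (h : ∀ a, P a → Q a) (p : Multiset ℕ) : cnt P p ≤ cnt Q p := by
  unfold cnt
  apply Multiset.card_le_card
  rw [Multiset.le_iff_count]
  intro a
  rw [Multiset.count_filter, Multiset.count_filter]
  by_cases hP : P a
  · rw [if_pos hP, if_pos (h a hP)]
  · rw [if_neg hP]; omega

lemma coe_mid3 (A B : List ℕ) (a : ℕ) :
    (↑(A ++ a :: B) : Multiset ℕ) = a ::ₘ (↑A + ↑B) := by
  rw [← Multiset.coe_add, ← Multiset.cons_coe]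
  ext c
  simp only [Multiset.count_add, Multiset.count_cons]
  omega

lemma coe_mid5 (A B C : List ℕ) (a b : ℕ) :
    (↑(A ++ a :: (B ++ b :: C)) : Multiset ℕ) = a ::ₘ b ::ₘ (↑A + ↑B + ↑C) := by
  rw [← Multiset.coe_add, ← Multiset.cons_coe, ← Multiset.coe_add, ← Multiset.cons_coe]
  ext c
  simp only [Multiset.count_add, Multiset.count_cons]
  omega

/-- the moved partition -/
def moveM (p : Multiset ℕ) (v w : ℕ) : Multiset ℕ :=
  (w + 1) ::ₘ (v - 1) ::ₘ ((p.erase v).erase w)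

section Move

variable {p : Multiset ℕ} (hpos : ∀ y ∈ p, 0 < y)
  {v w : ℕ} (hv : v ∈ p) (hvodd : Odd v) (hvcnt : Odd (p.count v))
  (hvmax : ∀ u, Odd u → v < u → Even (p.count u))
  (hw : w = 0 ∨ (w ∈ p ∧ Odd w)) (hwle : w + 2 ≤ v)
  (hwmax : ∀ u ∈ p, Odd u → u < v → u ≤ w)

include hpos hv hvodd hvcnt hvmax hw hwle hwmax in
lemma move_spec :
    (∀ y ∈ moveM p v w, 0 < y) ∧ (moveM p v w).sum = p.sum ∧ mu (moveM p v w) < mu p ∧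
      Dom p (moveM p v w) ∧
      (∀ r : Multiset ℕ, (∀ x, Odd x → Even (r.count x)) → Dom p r → Dom (moveM p v w) r) := by
  classical
  have hv3 : 3 ≤ v := by
    rcases hvodd with ⟨m, hm⟩; omega
  obtain ⟨l, hldef⟩ : ∃ l, sortedD p = l := ⟨_, rfl⟩
  obtain ⟨i, hidef⟩ : ∃ i, cnt (v ≤ ·) p = i := ⟨_, rfl⟩
  obtain ⟨j, hjdef⟩ : ∃ j, cnt (w + 1 ≤ ·) p = j := ⟨_, rfl⟩
  have hmono_v : ∀ a b : ℕ, a ≤ b → v ≤ a → v ≤ b := fun a b hab ha => le_trans ha hab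
  have hmono_w : ∀ a b : ℕ, a ≤ b → w + 1 ≤ a → w + 1 ≤ b := fun a b hab ha => le_trans ha hab
  have hnv0 : ¬ (v ≤ 0) := by omega
  have hnw0 : ¬ (w + 1 ≤ 0) := by omega
  have hi1 : 1 ≤ i := by
    rw [← hidef, cnt, Nat.succ_le_iff, Multiset.card_pos]
    intro h
    have : v ∈ p.filter (v ≤ ·) := Multiset.mem_filter.2 ⟨hv, le_refl v⟩
    rw [h] at this; simp at this
  have hicard : i ≤ Multiset.card p := hidef ▸ cnt_le_card p
  have hjcard : j ≤ Multiset.card p := hjdef ▸ cnt_le_card p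
  have hij : i ≤ j := hidef ▸ hjdef ▸ cnt_imp_le (fun a ha => by omega) p
  have hlen : l.length = Multiset.card p := hldef ▸ length_sortedD p
  -- pt facts
  have hpti1 : pt p (i - 1) = v := by rw [← hidef]; exact pt_cnt_pred hv
  have hptB : ∀ k, i ≤ k → pt p k ≤ v - 1 := by
    intro k hk
    have := not_pt_of_cnt_le (P := (v ≤ ·)) hmono_v hnv0 (p := p) (k := k) (hidef ▸ hk)
    omega
  have hptC : ∀ k, k < j → w + 1 ≤ pt p k := by
    intro k hk
    exact pt_of_lt_cnt (P := (w + 1 ≤ ·)) hmono_w (hjdef ▸ hk)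
  have hptD : ∀ k, j ≤ k → pt p k ≤ w := by
    intro k hk
    have := not_pt_of_cnt_le (P := (w + 1 ≤ ·)) hmono_w hnw0 (p := p) (k := k) (hjdef ▸ hk)
    omega
  have hptget : ∀ k (hkl : k < l.length), pt p k = l[k] := by
    intro k hkl
    rw [pt, hldef, List.getD_eq_getElem _ _ hkl]
  have hptmem : ∀ k, k < Multiset.card p → pt p k ∈ p := by
    intro k hk
    have hkl : k < l.length := by omega
    rw [hptget k hkl]
    refine mem_sortedD.1 ?_
    rw [hldef]
    exact List.getElem_mem _
  have hmidE : ∀ k, i ≤ k → k < j → Even (pt p k) := by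
    intro k hk1 hk2
    rcases Nat.even_or_odd (pt p k) with he | ho
    · exact he
    exfalso
    have hmem : pt p k ∈ p := hptmem k (by omega)
    have h1 : pt p k ≤ v - 1 := hptB k hk1
    have h2 : w + 1 ≤ pt p k := hptC k hk2
    have := hwmax _ hmem ho (by omega)
    omega
  -- parity of prefix sums in window
  have hSi_odd : Odd (S p i) := by
    rw [← hidef, S_cnt hmono_v]
    exact odd_filter_sum hvodd hvcnt hvmax
  have hSodd : ∀ k, i ≤ k → k ≤ j → Odd (S p k) := by
    have key : ∀ d, i + d ≤ j → Odd (S p (i + d)) := by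
      intro d
      induction d with
      | zero => intro _; simpa using hSi_odd
      | succ n ih =>
        intro hd
        have h1 := ih (by omega)
        have h2 : Even (pt p (i + n)) := hmidE (i + n) (by omega) (by omega)
        have h3 : S p (i + (n+1)) = S p (i + n) + pt p (i + n) := by
          have heq : i + (n + 1) = (i + n) + 1 := by omega
          rw [heq, S_succ]
        rw [h3]
        rcases h1 with ⟨a, ha⟩; rcases h2 with ⟨b, hb⟩
        exact ⟨a + b, by omega⟩
    intro k hk1 hk2
    have heq : k = i + (k - i) := by omega
    rw [heq]
    exact key _ (by omega)
  -- list decomposition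
  obtain ⟨P0, hP0⟩ : ∃ P0, l.take (i - 1) = P0 := ⟨_, rfl⟩
  obtain ⟨M, hM⟩ : ∃ M, (l.drop i).take (j - i) = M := ⟨_, rfl⟩
  obtain ⟨Z, hZ⟩ : ∃ Z, l.drop (j + 1) = Z := ⟨_, rfl⟩
  have hP0len : P0.length = i - 1 := by
    rw [← hP0, List.length_take]; omega
  have hMlen : M.length = j - i := by
    rw [← hM, List.length_take, List.length_drop]; omega
  have hi1l : i - 1 < l.length := by omega
  have hgeti : l[i-1] = v := by
    have := hpti1
    rwa [hptget (i-1) hi1l] at this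
  have hdrop1 : l.drop (i - 1) = v :: l.drop i := by
    have h' : i - 1 + 1 = i := by omega
    rw [List.drop_eq_getElem_cons hi1l, hgeti, h']
  have hS_decomp : ∀ k, S p k = ((P0 ++ v :: (M ++ w :: Z)).take k).sum := by
    intro k
    rcases hw with hw0 | ⟨hwmem, -⟩
    · -- w = 0 : j = card p, Z = [], M = drop i, padded by one 0
      have hjall : j = Multiset.card p := by
        rw [← hjdef, hw0, cnt]
        have heq : p.filter (0 + 1 ≤ ·) = p := by
          rw [Multiset.filter_eq_self]
          intro a ha; have := hpos a ha; omega
        rw [heq]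
      have hZnil : Z = [] := by
        rw [← hZ, List.drop_eq_nil_iff]; omega
      have hMeq : M = l.drop i := by
        rw [← hM]
        apply List.take_of_length_le
        rw [List.length_drop]; omega
      have hldecomp : l = P0 ++ v :: (l.drop i) := by
        conv_lhs => rw [← List.take_append_drop (i-1) l]
        rw [hdrop1, hP0]
      have hassoc : P0 ++ v :: (M ++ w :: Z) = (P0 ++ v :: l.drop i) ++ [0] := by
        rw [hZnil, hMeq, hw0]; simp
      rw [hassoc, ← hldecomp]
      rw [List.take_append, List.sum_append]
      have h0 : (([0] : List ℕ).take (k - l.length)).sum = 0 := by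
        rcases Nat.eq_zero_or_pos (k - l.length) with h | h
        · rw [h]; simp
        · have heq : k - l.length = (k - l.length - 1) + 1 := by omega
          rw [heq]; simp
      rw [h0, S, hldef]
      omega
    · -- w > 0 case : l = P0 ++ v :: (M ++ w :: Z)
      have hjlt : j < l.length := by
        rw [hlen]
        have hflt : p.filter (w + 1 ≤ ·) < p := by
          apply lt_of_le_of_ne (Multiset.filter_le _ p)
          intro heq
          have : w ∈ p.filter (w + 1 ≤ ·) := heq.symm ▸ hwmem
          rw [Multiset.mem_filter] at this
          omega
        rw [← hjdef, cnt]
        exact Multiset.card_lt_card hflt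
      have hgetj : l[j] = w := by
        have hle : pt p j ≤ w := hptD j (le_refl j)
        have hge : w ≤ pt p j := by
          have hwl : w ∈ l := hldef ▸ mem_sortedD.2 hwmem
          have hwnt : w ∉ l.take j := by
            intro hmem
            rw [← hldef, ← hjdef, take_cnt hmono_w p] at hmem
            have := List.of_mem_filter hmem
            simp at this
          have hwd : w ∈ l.drop j := by
            rcases List.mem_append.1 (by rw [List.take_append_drop j l]; exact hwl) with h | h
            · exact absurd h hwnt
            · exact h
          rcases List.mem_iff_getElem.1 hwd with ⟨idx, hidx, hwi⟩
          have hidx' : j + idx < l.length := by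
            have := hidx; rw [List.length_drop] at this; omega
          have hwidx : l[j + idx] = w := by
            rw [← hwi, List.getElem_drop]
          have h2 := sorted_rel (hldef ▸ sortedD_sorted p) (Nat.le_add_right j idx) hidx'
          rw [List.getD_eq_getElem _ _ (by omega : j < l.length),
            List.getD_eq_getElem _ _ hidx', hwidx] at h2
          rw [hptget j (by omega)]
          exact h2
        have heq : pt p j = w := by omega
        rwa [hptget j (by omega)] at heq
      have hldecomp : l = P0 ++ v :: (M ++ w :: Z) := by
        conv_lhs => rw [← List.take_append_drop (i-1) l]
        rw [hdrop1, hP0]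
        congr 2
        conv_lhs => rw [← List.take_append_drop (j - i) (l.drop i)]
        rw [hM]
        congr 1
        rw [List.drop_drop]
        have h2 : (i + (j - i)) = j := by omega
        rw [h2, List.drop_eq_getElem_cons hjlt, hgetj, hZ]
      rw [S, hldef]
      conv_lhs => rw [hldecomp]
  -- element bounds
  have hlsort : l.Pairwise (· ≥ ·) := hldef ▸ sortedD_sorted p
  have hP0elem : ∀ a ∈ P0, v ≤ a := by
    intro a ha
    rw [← hP0] at ha
    have htt : l.take (i-1) = (l.take i).take (i-1) := by
      rw [List.take_take]
      congr 1
      omega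
    rw [htt] at ha
    have ha' : a ∈ l.take i := List.mem_of_mem_take ha
    rw [← hldef, ← hidef, take_cnt hmono_v p] at ha'
    exact of_decide_eq_true (List.mem_filter.1 ha').2
  have hMelem : ∀ a ∈ M, w + 1 ≤ a ∧ a ≤ v - 1 := by
    intro a ha
    rw [← hM] at ha
    rcases List.mem_iff_getElem.1 ha with ⟨idx, hidx, hai⟩
    have hidx1 : idx < j - i := by
      have := hidx; rw [List.length_take] at this; omega
    have hidx2 : idx < (l.drop i).length := by
      have := hidx; rw [List.length_take] at this; omega
    have hidx3 : i + idx < l.length := by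
      rw [List.length_drop] at hidx2; omega
    have hai' : a = l[i + idx] := by
      rw [← hai, List.getElem_take, List.getElem_drop]
    have hpt : pt p (i + idx) = a := by rw [hptget _ hidx3, ← hai']
    constructor
    · have := hptC (i + idx) (by omega); omega
    · have := hptB (i + idx) (by omega); omega
  have hZelem : ∀ a ∈ Z, a ≤ w := by
    intro a ha
    rw [← hZ] at ha
    rcases List.mem_iff_getElem.1 ha with ⟨idx, hidx, hai⟩
    have hidx2 : j + 1 + idx < l.length := by
      rw [List.length_drop] at hidx; omega
    have hai' : a = l[j + 1 + idx] := by
      rw [← hai, List.getElem_drop]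
    have hpt : pt p (j + 1 + idx) = a := by rw [hptget _ hidx2, ← hai']
    have := hptD (j + 1 + idx) (by omega)
    omega
  have hP0sort : P0.Pairwise (· ≥ ·) := by
    rw [← hP0]; exact List.Pairwise.sublist (List.take_sublist _ _) hlsort
  have hMsort : M.Pairwise (· ≥ ·) := by
    rw [← hM]
    exact List.Pairwise.sublist ((List.take_sublist _ _).trans (List.drop_sublist _ _)) hlsort
  have hZsort : Z.Pairwise (· ≥ ·) := by
    rw [← hZ]; exact List.Pairwise.sublist (List.drop_sublist _ _) hlsort
  obtain ⟨l2, hl2⟩ : ∃ l2, P0 ++ (v-1) :: (M ++ (w+1) :: Z) = l2 := ⟨_, rfl⟩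
  have hl2sort : l2.Pairwise (· ≥ ·) := by
    rw [← hl2]
    rw [List.pairwise_append]
    refine ⟨hP0sort, ?_, ?_⟩
    · rw [List.pairwise_cons]
      refine ⟨?_, ?_⟩
      · intro b hb
        rcases List.mem_append.1 hb with hbM | hbw
        · exact (hMelem b hbM).2
        · rcases List.mem_cons.1 hbw with rfl | hbZ
          · omega
          · have := hZelem b hbZ; omega
      · rw [List.pairwise_append]
        refine ⟨hMsort, ?_, ?_⟩
        · rw [List.pairwise_cons]
          exact ⟨fun b hb => by have := hZelem b hb; omega, hZsort⟩
        · intro a haM b hb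
          have h1 := (hMelem a haM).1
          rcases List.mem_cons.1 hb with rfl | hbZ
          · omega
          · have := hZelem b hbZ; omega
    · intro a haP b hb
      have h1 := hP0elem a haP
      rcases List.mem_cons.1 hb with rfl | hb2
      · omega
      rcases List.mem_append.1 hb2 with hbM | hbw
      · have := (hMelem b hbM).2; omega
      · rcases List.mem_cons.1 hbw with rfl | hbZ
        · omega
        · have := hZelem b hbZ; omega
  -- multiset identity
  have hcoe_l2 : (↑l2 : Multiset ℕ) = moveM p v w := by
    have hpcoe : p = ↑l := by rw [← hldef, coe_sortedD]
    rcases hw with hw0 | ⟨hwmem, -⟩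
    · -- w = 0
      have hjall : j = Multiset.card p := by
        rw [← hjdef, hw0, cnt]
        have heq : p.filter (0 + 1 ≤ ·) = p := by
          rw [Multiset.filter_eq_self]
          intro a ha; have := hpos a ha; omega
        rw [heq]
      have hZnil : Z = [] := by
        rw [← hZ, List.drop_eq_nil_iff]; omega
      have hMeq : M = l.drop i := by
        rw [← hM]
        apply List.take_of_length_le
        rw [List.length_drop]; omega
      have hldecomp : l = P0 ++ v :: M := by
        conv_lhs => rw [← List.take_append_drop (i-1) l]
        rw [hdrop1, hP0, hMeq]
      have hpeq : p = v ::ₘ (↑P0 + ↑M) := by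
        rw [hpcoe, hldecomp, coe_mid3]
      have h0nm : (0 : ℕ) ∉ ((↑P0 : Multiset ℕ) + ↑M) := by
        intro h0
        have h0p : (0 : ℕ) ∈ p := by
          rw [hpeq]; exact Multiset.mem_cons_of_mem h0
        have := hpos 0 h0p; omega
      have herase : (p.erase v).erase w = ↑P0 + ↑M := by
        rw [hpeq, Multiset.erase_cons_head, hw0, Multiset.erase_of_notMem h0nm]
      rw [moveM, herase, ← hl2, coe_mid5]
      rw [hZnil, hw0]
      ext a
      simp only [Multiset.count_add, Multiset.count_cons, Multiset.coe_nil, Multiset.count_zero]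
      omega
    · -- w > 0
      have hjlt : j < l.length := by
        rw [hlen]
        have hflt : p.filter (w + 1 ≤ ·) < p := by
          apply lt_of_le_of_ne (Multiset.filter_le _ p)
          intro heq
          have : w ∈ p.filter (w + 1 ≤ ·) := heq.symm ▸ hwmem
          rw [Multiset.mem_filter] at this
          omega
        rw [← hjdef, cnt]
        exact Multiset.card_lt_card hflt
      have hgetj : l[j] = w := by
        have hle : pt p j ≤ w := hptD j (le_refl j)
        have hge : w ≤ pt p j := by
          have hwl : w ∈ l := hldef ▸ mem_sortedD.2 hwmem
          have hwnt : w ∉ l.take j := by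
            intro hmem
            rw [← hldef, ← hjdef, take_cnt hmono_w p] at hmem
            have := List.of_mem_filter hmem
            simp at this
          have hwd : w ∈ l.drop j := by
            rcases List.mem_append.1 (by rw [List.take_append_drop j l]; exact hwl) with h | h
            · exact absurd h hwnt
            · exact h
          rcases List.mem_iff_getElem.1 hwd with ⟨idx, hidx, hwi⟩
          have hidx' : j + idx < l.length := by
            have := hidx; rw [List.length_drop] at this; omega
          have hwidx : l[j + idx] = w := by
            rw [← hwi, List.getElem_drop]
          have h2 := sorted_rel hlsort (Nat.le_add_right j idx) hidx'
          rw [List.getD_eq_getElem _ _ (by omega : j < l.length),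
            List.getD_eq_getElem _ _ hidx', hwidx] at h2
          rw [hptget j (by omega)]
          exact h2
        have heq : pt p j = w := by omega
        rwa [hptget j (by omega)] at heq
      have hldecomp : l = P0 ++ v :: (M ++ w :: Z) := by
        conv_lhs => rw [← List.take_append_drop (i-1) l]
        rw [hdrop1, hP0]
        congr 2
        conv_lhs => rw [← List.take_append_drop (j - i) (l.drop i)]
        rw [hM]
        congr 1
        rw [List.drop_drop]
        have h2 : (i + (j - i)) = j := by omega
        rw [h2, List.drop_eq_getElem_cons hjlt, hgetj, hZ]
      have hpeq : p = v ::ₘ (w ::ₘ (↑P0 + ↑M + ↑Z)) := by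
        rw [hpcoe, hldecomp, coe_mid5]
      have herase : (p.erase v).erase w = ↑P0 + ↑M + ↑Z := by
        rw [hpeq, Multiset.erase_cons_head, Multiset.erase_cons_head]
      rw [moveM, herase, ← hl2, coe_mid5]
      ext a
      simp only [Multiset.count_add, Multiset.count_cons]
      omega
  have hsortedD2 : sortedD (moveM p v w) = l2 := sortedD_eq hl2sort hcoe_l2
  have hS2 : ∀ k, S (moveM p v w) k = ((P0 ++ (v-1) :: (M ++ (w+1) :: Z)).take k).sum := by
    intro k
    rw [S, hsortedD2, ← hl2]
  have hSout : ∀ k, (k ≤ i - 1 ∨ j + 1 ≤ k) → S (moveM p v w) k = S p k := by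
    intro k hk
    rw [hS2, hS_decomp]
    rcases hk with hk | hk
    · rw [sum_take_append_cons_le (by omega : k ≤ P0.length),
        sum_take_append_cons_le (by omega : k ≤ P0.length)]
    · rw [sum_take_append_cons_gt (by omega : P0.length < k),
        sum_take_append_cons_gt (by omega : P0.length < k)]
      rw [sum_take_append_cons_gt (by rw [hMlen]; omega : M.length < k - P0.length - 1),
        sum_take_append_cons_gt (by rw [hMlen]; omega : M.length < k - P0.length - 1)]
      omega
  have hSin : ∀ k, i ≤ k → k ≤ j → S (moveM p v w) k + 1 = S p k := by
    intro k hk1 hk2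
    rw [hS2, hS_decomp]
    rw [sum_take_append_cons_gt (by omega : P0.length < k),
      sum_take_append_cons_gt (by omega : P0.length < k)]
    rw [sum_take_append_cons_le (by rw [hMlen]; omega : k - P0.length - 1 ≤ M.length),
      sum_take_append_cons_le (by rw [hMlen]; omega : k - P0.length - 1 ≤ M.length)]
    omega
  have hDom2 : ∀ k, S (moveM p v w) k ≤ S p k := by
    intro k
    by_cases hin : i ≤ k ∧ k ≤ j
    · have := hSin k hin.1 hin.2; omega
    · rw [hSout k (by omega)]
  -- conclusions
  refine ⟨?_, ?_, ?_, hDom2, ?_⟩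
  · intro y hy
    rw [moveM] at hy
    rcases Multiset.mem_cons.1 hy with rfl | hy
    · omega
    rcases Multiset.mem_cons.1 hy with rfl | hy
    · omega
    · exact hpos y (Multiset.mem_of_mem_erase (Multiset.mem_of_mem_erase hy))
  · have hK : ∀ K, Multiset.card p ≤ K → Multiset.card (moveM p v w) ≤ K → j + 1 ≤ K →
        (moveM p v w).sum = p.sum := by
      intro K h1 h2 h3
      rw [← S_of_card_le p h1, ← S_of_card_le (moveM p v w) h2]
      exact hSout K (Or.inr h3)
    exact hK (Multiset.card p + Multiset.card (moveM p v w) + j + 1) (by omega) (by omega) (by omega)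
  · have hsum : (moveM p v w).sum = p.sum := by
      have hK : ∀ K, Multiset.card p ≤ K → Multiset.card (moveM p v w) ≤ K → j + 1 ≤ K →
          (moveM p v w).sum = p.sum := by
        intro K h1 h2 h3
        rw [← S_of_card_le p h1, ← S_of_card_le (moveM p v w) h2]
        exact hSout K (Or.inr h3)
      exact hK (Multiset.card p + Multiset.card (moveM p v w) + j + 1) (by omega) (by omega) (by omega)
    apply mu_lt_of_dom hsum hDom2 (k0 := i)
      (by have := card_le_sum_pos hpos; omega)
    have := hSin i (le_refl i) hij
    omega
  · -- maximality transfer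
    intro r hrC hDom k'
    by_cases hin : i ≤ k' ∧ k' ≤ j
    · by_contra hgt
      push_neg at hgt
      have hle' : S r k' ≤ S p k' := hDom k'
      have hSin' := hSin k' hin.1 hin.2
      have heq : S r k' = S p k' := by
        change S (moveM p v w) k' < S r k' at hgt
        omega
      have hex : ∃ n, i ≤ n ∧ n ≤ j ∧ S r n = S p n := ⟨k', hin.1, hin.2, heq⟩
      obtain ⟨hKi, hKj, hKS⟩ := Nat.find_spec hex
      set K := Nat.find hex with hKdef
      have hK1 : 1 ≤ K := by omega
      have hcorner : pt r K < pt r (K - 1) := by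
        have e2 := S_succ r (K - 1)
        have e3 := S_succ p (K - 1)
        have eK : K - 1 + 1 = K := by omega
        rw [eK] at e2 e3
        have e6 : S r (K+1) ≤ S p (K+1) := hDom _
        have e7 := S_succ r K
        have e8 := S_succ p K
        rcases eq_or_lt_of_le hKi with hKeq | hKgt
        · -- K = i
          have e1 : S r (K-1) ≤ S p (K-1) := hDom _
          have e5 : pt p (K-1) = v := by rw [← hKeq]; exact hpti1
          have e9 : pt p K ≤ v - 1 := by rw [← hKeq]; exact hptB i (le_refl i)
          omega
        · -- i < K
          have hmin := Nat.find_min hex (m := K - 1) (by omega)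
          have e0 : S r (K-1) ≤ S p (K-1) := hDom _
          have e0' : S r (K-1) ≠ S p (K-1) := by
            intro h
            exact hmin ⟨by omega, by omega, h⟩
          have e9 : pt p K ≤ pt p (K-1) := pt_anti p (by omega)
          omega
      have heven := even_S_corner hrC hK1 hcorner
      have hodd : Odd (S p K) := hSodd K hKi hKj
      rw [hKS] at heven
      rcases heven with ⟨a, ha⟩
      rcases hodd with ⟨b, hb⟩
      omega
    · show S r k' ≤ S (moveM p v w) k'
      rw [hSout k' (by omega)]
      exact hDom k'


end Move
end Work

namespace Work

lemma ofTypeC_iff {r : Multiset ℕ} : OfType .C r ↔ ∀ x, Odd x → Even (r.count x) := Iff.rfl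

lemma collapse_unique {X : PType} {p q q' : Multiset ℕ}
    (h : IsCollapse X p q) (h' : IsCollapse X p q') : q = q' := by
  obtain ⟨⟨hpos, hsum⟩, hT, hD, hmax⟩ := h
  obtain ⟨⟨hpos', hsum'⟩, hT', hD', hmax'⟩ := h'
  have d1 : Dom q q' := hmax q' ⟨hpos', hsum'⟩ hT' hD'
  have d2 : Dom q' q := hmax' q ⟨hpos, hsum⟩ hT hD
  exact eq_of_S_eq hpos hpos' (fun k => le_antisymm (d2 k) (d1 k))

lemma collapse_eq_of {X : PType} {p q : Multiset ℕ} (h : IsCollapse X p q) :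
    collapse X p = q := by
  have hex : ∃ q', IsCollapse X p q' := ⟨q, h⟩
  rw [collapse]
  rw [dif_pos hex]
  exact collapse_unique hex.choose_spec h

lemma self_collapse {p : Multiset ℕ} (hpos : ∀ y ∈ p, 0 < y) (hC : OfType .C p) :
    IsCollapse .C p p :=
  ⟨⟨hpos, rfl⟩, hC, Dom_refl p, fun _ _ _ hD => hD⟩

lemma exists_move_data {p : Multiset ℕ} (hpos : ∀ y ∈ p, 0 < y) (heven : Even p.sum)
    (hnC : ¬ OfType .C p) :
    ∃ v w, v ∈ p ∧ Odd v ∧ Odd (p.count v) ∧ (∀ u, Odd u → v < u → Even (p.count u)) ∧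
      (w = 0 ∨ (w ∈ p ∧ Odd w)) ∧ w + 2 ≤ v ∧ (∀ u ∈ p, Odd u → u < v → u ≤ w) := by
  classical
  rw [ofTypeC_iff] at hnC
  push_neg at hnC
  obtain ⟨x0, hx0odd, hx0⟩ := hnC
  have hx0cnt : Odd (p.count x0) := Nat.odd_iff.2 (by
    rcases Nat.even_or_odd (p.count x0) with h | h
    · exact absurd h hx0
    · exact Nat.odd_iff.1 h)
  set cand := p.toFinset.filter (fun u => Odd u ∧ Odd (p.count u)) with hcand
  have hx0mem : x0 ∈ cand := by
    rw [hcand, Finset.mem_filter, Multiset.mem_toFinset]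
    refine ⟨?_, hx0odd, hx0cnt⟩
    rw [← Multiset.count_pos]
    rcases hx0cnt with ⟨a, ha⟩; omega
  have hne : cand.Nonempty := ⟨x0, hx0mem⟩
  set v := cand.max' hne with hvdef
  have hvmem : v ∈ cand := cand.max'_mem hne
  rw [hcand, Finset.mem_filter, Multiset.mem_toFinset] at hvmem
  obtain ⟨hvp, hvodd, hvcnt⟩ := hvmem
  have hvmax : ∀ u, Odd u → v < u → Even (p.count u) := by
    intro u huodd hvu
    by_contra hne'
    have hucnt : Odd (p.count u) := Nat.odd_iff.2 (by
      rcases Nat.even_or_odd (p.count u) with h | h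
      · exact absurd h hne'
      · exact Nat.odd_iff.1 h)
    have humem : u ∈ cand := by
      rw [hcand, Finset.mem_filter, Multiset.mem_toFinset]
      refine ⟨?_, huodd, hucnt⟩
      rw [← Multiset.count_pos]
      rcases hucnt with ⟨a, ha⟩; omega
    have := cand.le_max' u humem
    omega
  have hv3 : 3 ≤ v := by
    rcases Nat.lt_or_ge v 3 with hlt | hge
    · exfalso
      have hv1 : v = 1 := by rcases hvodd with ⟨m, hm⟩; omega
      have hodd : Odd ((p.filter (v ≤ ·)).sum) := odd_filter_sum hvodd hvcnt hvmax
      have hfeq : p.filter (v ≤ ·) = p := by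
        rw [Multiset.filter_eq_self]
        intro a ha
        have := hpos a ha; omega
      rw [hfeq] at hodd
      rcases heven with ⟨a, ha⟩; rcases hodd with ⟨b, hb⟩; omega
    · exact hge
  set wcand := p.toFinset.filter (fun u => Odd u ∧ u + 2 ≤ v) with hwcand
  by_cases hwne : wcand.Nonempty
  · set w := wcand.max' hwne with hwdef
    have hwmem : w ∈ wcand := wcand.max'_mem hwne
    rw [hwcand, Finset.mem_filter, Multiset.mem_toFinset] at hwmem
    obtain ⟨hwp, hwodd, hwle⟩ := hwmem
    refine ⟨v, w, hvp, hvodd, hvcnt, hvmax, Or.inr ⟨hwp, hwodd⟩, hwle, ?_⟩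
    intro u hup huodd huv
    have hule : u + 2 ≤ v := by
      rcases huodd with ⟨a, ha⟩; rcases hvodd with ⟨b, hb⟩; omega
    have humem : u ∈ wcand := by
      rw [hwcand, Finset.mem_filter, Multiset.mem_toFinset]
      exact ⟨hup, huodd, hule⟩
    exact wcand.le_max' u humem
  · refine ⟨v, 0, hvp, hvodd, hvcnt, hvmax, Or.inl rfl, by omega, ?_⟩
    intro u hup huodd huv
    exfalso
    have hule : u + 2 ≤ v := by
      rcases huodd with ⟨a, ha⟩; rcases hvodd with ⟨b, hb⟩; omega
    exact hwne ⟨u, by rw [hwcand, Finset.mem_filter, Multiset.mem_toFinset]; exact ⟨hup, huodd, hule⟩⟩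

section MoveIff

variable {p : Multiset ℕ} (hpos : ∀ y ∈ p, 0 < y)
  {v w : ℕ} (hv : v ∈ p) (hvodd : Odd v) (hvcnt : Odd (p.count v))
  (hvmax : ∀ u, Odd u → v < u → Even (p.count u))
  (hw : w = 0 ∨ (w ∈ p ∧ Odd w)) (hwle : w + 2 ≤ v)
  (hwmax : ∀ u ∈ p, Odd u → u < v → u ≤ w)

include hpos hv hvodd hvcnt hvmax hw hwle hwmax in
lemma collapse_iff_move :
    ∀ q, IsCollapse .C p q ↔ IsCollapse .C (moveM p v w) q := by
  obtain ⟨hpos2, hsum2, hmu2, hDom2, htrans⟩ :=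
    move_spec hpos hv hvodd hvcnt hvmax hw hwle hwmax
  intro q
  constructor
  · rintro ⟨⟨hqpos, hqsum⟩, hqT, hqD, hqmax⟩
    refine ⟨⟨hqpos, by rw [hsum2]; exact hqsum⟩, hqT, htrans q hqT hqD, ?_⟩
    intro r hr hrT hrD
    exact hqmax r ⟨hr.1, by rw [← hsum2]; exact hr.2⟩ hrT (Dom_trans hDom2 hrD)
  · rintro ⟨⟨hqpos, hqsum⟩, hqT, hqD, hqmax⟩
    refine ⟨⟨hqpos, by rw [← hsum2]; exact hqsum⟩, hqT, Dom_trans hDom2 hqD, ?_⟩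
    intro r hr hrT hrD
    exact hqmax r ⟨hr.1, by rw [hsum2]; exact hr.2⟩ hrT (htrans r hrT hrD)

end MoveIff

lemma exists_collapseC : ∀ (N : ℕ) (p : Multiset ℕ), mu p < N → (∀ y ∈ p, 0 < y) →
    Even p.sum → ∃ q, IsCollapse .C p q := by
  intro N
  induction N with
  | zero => intro p h; omega
  | succ n ih =>
    intro p hmu hpos heven
    by_cases hC : OfType .C p
    · exact ⟨p, self_collapse hpos hC⟩
    obtain ⟨v, w, hv, hvodd, hvcnt, hvmax, hw, hwle, hwmax⟩ :=
      exists_move_data hpos heven hC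
    obtain ⟨hpos2, hsum2, hmu2, hDom2, htrans⟩ :=
      move_spec hpos hv hvodd hvcnt hvmax hw hwle hwmax
    obtain ⟨q, hq⟩ := ih (moveM p v w) (by omega) hpos2 (by rw [hsum2]; exact heven)
    exact ⟨q, (collapse_iff_move hpos hv hvodd hvcnt hvmax hw hwle hwmax q).2 hq⟩

end Work

namespace Work

lemma filter_ne_add_eq (s : Multiset ℕ) (b : ℕ) :
    s.filter (· ≠ b) + s.filter (· = b) = s := by
  ext u
  rw [Multiset.count_add, Multiset.count_filter, Multiset.count_filter]
  by_cases hu : u = b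
  · rw [if_neg (by simpa using hu), if_pos hu]; omega
  · rw [if_pos hu, if_neg hu]; omega

lemma erase_erase_filter {p : Multiset ℕ} {v w b : ℕ} (hv : v ≠ b) (hw : w ≠ b)
    (hvw : v ≠ w) :
    ((p.filter (· ≠ b)).erase v).erase w = ((p.erase v).erase w).filter (· ≠ b) := by
  ext u
  by_cases huv : u = v
  · subst huv
    rw [Multiset.count_erase_of_ne hvw, Multiset.count_erase_self,
      Multiset.count_filter, if_pos hv, Multiset.count_filter, if_pos hv,
      Multiset.count_erase_of_ne hvw, Multiset.count_erase_self]
  · by_cases huw : u = w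
    · subst huw
      rw [Multiset.count_erase_self, Multiset.count_erase_of_ne (Ne.symm hvw),
        Multiset.count_filter, if_pos hw, Multiset.count_filter, if_pos hw,
        Multiset.count_erase_self, Multiset.count_erase_of_ne (Ne.symm hvw)]
    · rw [Multiset.count_erase_of_ne huw, Multiset.count_erase_of_ne huv,
        Multiset.count_filter, Multiset.count_filter,
        Multiset.count_erase_of_ne huw, Multiset.count_erase_of_ne huv]

lemma main_step : ∀ (B : ℕ) (p : Multiset ℕ), mu p < B → (∀ y ∈ p, 0 < y) → Even p.sum →
    ∀ x : ℕ, 2 * x ∈ p →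
    collapse .C p = collapse .C (p.filter (· ≠ 2 * x)) + p.filter (· = 2 * x) := by
  intro B
  induction B with
  | zero => intro p h; omega
  | succ n ih =>
    intro p hmu hpos heven x hmem
    classical
    have hx2pos : 0 < 2 * x := hpos _ hmem
    have hpfpos : ∀ y ∈ p.filter (· ≠ 2 * x), 0 < y :=
      fun y hy => hpos y (Multiset.mem_of_mem_filter hy)
    have hpfsum : (p.filter (· = 2 * x)).sum = p.count (2 * x) * (2 * x) := by
      rw [Multiset.filter_eq', Multiset.sum_replicate, smul_eq_mul]
    have hevenpf : Even ((p.filter (· ≠ 2 * x)).sum) := by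
      have hsplit := filter_ne_add_eq p (2 * x)
      have hsum : (p.filter (· ≠ 2 * x)).sum + (p.filter (· = 2 * x)).sum = p.sum := by
        rw [← Multiset.sum_add, hsplit]
      rcases heven with ⟨a, ha⟩
      have h2 : ∃ c, p.count (2 * x) * (2 * x) = 2 * c := ⟨p.count (2 * x) * x, by ring⟩
      rcases h2 with ⟨c, hc⟩
      refine ⟨(p.filter (· ≠ 2 * x)).sum / 2 , ?_⟩
      omega
    by_cases hC : OfType .C p
    · have h1 : collapse .C p = p := collapse_eq_of (self_collapse hpos hC)
      have hpfC : OfType .C (p.filter (· ≠ 2 * x)) := by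
        rw [ofTypeC_iff]
        intro u hu
        rw [Multiset.count_filter]
        by_cases h : u ≠ 2 * x
        · rw [if_pos h]; exact (ofTypeC_iff.1 hC) u hu
        · rw [if_neg h]; exact Even.zero
      have h2 : collapse .C (p.filter (· ≠ 2 * x)) = p.filter (· ≠ 2 * x) :=
        collapse_eq_of (self_collapse hpfpos hpfC)
      rw [h1, h2, filter_ne_add_eq]
    · obtain ⟨v, w, hv, hvodd, hvcnt, hvmax, hw, hwle, hwmax⟩ :=
        exists_move_data hpos heven hC
      obtain ⟨hpos2, hsum2, hmu2, hDom2, htrans⟩ :=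
        move_spec hpos hv hvodd hvcnt hvmax hw hwle hwmax
      have hvne : v ≠ 2 * x := by rcases hvodd with ⟨a, ha⟩; omega
      have hwne : w ≠ 2 * x := by
        rcases hw with rfl | ⟨-, hwodd⟩
        · omega
        · rcases hwodd with ⟨a, ha⟩; omega
      have hvwne : v ≠ w := by omega
      -- move data for pf
      have hvpf : v ∈ p.filter (· ≠ 2 * x) := Multiset.mem_filter.2 ⟨hv, hvne⟩
      have hcount_pf : ∀ u, u ≠ 2 * x → (p.filter (· ≠ 2 * x)).count u = p.count u := by
        intro u hu
        rw [Multiset.count_filter, if_pos hu]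
      have hvcnt' : Odd ((p.filter (· ≠ 2 * x)).count v) := by rw [hcount_pf v hvne]; exact hvcnt
      have hvmax' : ∀ u, Odd u → v < u → Even ((p.filter (· ≠ 2 * x)).count u) := by
        intro u hu hvu
        have hune : u ≠ 2 * x := by rcases hu with ⟨a, ha⟩; omega
        rw [hcount_pf u hune]
        exact hvmax u hu hvu
      have hw' : w = 0 ∨ (w ∈ p.filter (· ≠ 2 * x) ∧ Odd w) := by
        rcases hw with rfl | ⟨hwp, hwodd⟩
        · exact Or.inl rfl
        · exact Or.inr ⟨Multiset.mem_filter.2 ⟨hwp, hwne⟩, hwodd⟩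
      have hwmax' : ∀ u ∈ p.filter (· ≠ 2 * x), Odd u → u < v → u ≤ w :=
        fun u hu => hwmax u (Multiset.mem_of_mem_filter hu)
      obtain ⟨hposN, hsumN, hmuN, hDomN, htransN⟩ :=
        move_spec hpfpos hvpf hvodd hvcnt' hvmax' hw' hwle hwmax'
      have hmupf : mu (p.filter (· ≠ 2 * x)) < mu p := by
        apply mu_lt_of_lt hpos (Multiset.filter_le _ p)
        intro heq
        have h2 := hmem
        rw [← heq] at h2
        exact (Multiset.mem_filter.1 h2).2 rfl
      -- collapse p = collapse (moveM p v w)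
      have hcol_p : collapse .C p = collapse .C (moveM p v w) := by
        obtain ⟨q2, hq2⟩ := exists_collapseC (mu (moveM p v w) + 1) (moveM p v w)
          (by omega) hpos2 (by rw [hsum2]; exact heven)
        rw [collapse_eq_of ((collapse_iff_move hpos hv hvodd hvcnt hvmax hw hwle hwmax q2).2 hq2),
          collapse_eq_of hq2]
      have hcol_pf : collapse .C (p.filter (· ≠ 2 * x)) =
          collapse .C (moveM (p.filter (· ≠ 2 * x)) v w) := by
        obtain ⟨q2, hq2⟩ := exists_collapseC (mu (moveM (p.filter (· ≠ 2 * x)) v w) + 1) _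
          (by omega) hposN (by rw [hsumN]; exact hevenpf)
        rw [collapse_eq_of
          ((collapse_iff_move hpfpos hvpf hvodd hvcnt' hvmax' hw' hwle hwmax' q2).2 hq2),
          collapse_eq_of hq2]
      -- counts
      have hcnt2 : (moveM p v w).count (2 * x) =
          ((if 2 * x = w + 1 then 1 else 0) + (if 2 * x = v - 1 then 1 else 0)) +
            p.count (2 * x) := by
        rw [moveM, Multiset.count_cons, Multiset.count_cons,
          Multiset.count_erase_of_ne (Ne.symm hwne), Multiset.count_erase_of_ne (Ne.symm hvne)]
        omega
      have hEF := erase_erase_filter (p := p) hvne hwne hvwne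
      have hcntN : (moveM (p.filter (· ≠ 2 * x)) v w).count (2 * x) =
          (if 2 * x = w + 1 then 1 else 0) + (if 2 * x = v - 1 then 1 else 0) := by
        rw [moveM, Multiset.count_cons, Multiset.count_cons, hEF,
          Multiset.count_filter]
        rw [if_neg (by simp)]
        omega
      have hmem2 : 2 * x ∈ moveM p v w := by
        rw [← Multiset.count_pos, hcnt2]
        have : 0 < p.count (2 * x) := Multiset.count_pos.2 hmem
        omega
      have hih1 := ih (moveM p v w) (by omega) hpos2 (by rw [hsum2]; exact heven) x hmem2
      -- filter identity (a)
      have ha : (moveM p v w).filter (· ≠ 2 * x) =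
          (moveM (p.filter (· ≠ 2 * x)) v w).filter (· ≠ 2 * x) := by
        rw [moveM, moveM, hEF]
        ext u
        rw [Multiset.count_filter, Multiset.count_filter]
        by_cases hu : u ≠ 2 * x
        · rw [if_pos hu, if_pos hu, Multiset.count_cons, Multiset.count_cons,
            Multiset.count_cons, Multiset.count_cons, Multiset.count_filter, if_pos hu]
        · rw [if_neg hu, if_neg hu]
      -- IH for N (or trivial if no 2x part)
      have hih2 : collapse .C (moveM (p.filter (· ≠ 2 * x)) v w) =
          collapse .C ((moveM (p.filter (· ≠ 2 * x)) v w).filter (· ≠ 2 * x)) +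
            (moveM (p.filter (· ≠ 2 * x)) v w).filter (· = 2 * x) := by
        by_cases h2xN : 2 * x ∈ moveM (p.filter (· ≠ 2 * x)) v w
        · exact ih _ (by omega) hposN (by rw [hsumN]; exact hevenpf) x h2xN
        · have hc0 : (moveM (p.filter (· ≠ 2 * x)) v w).count (2 * x) = 0 :=
            Multiset.count_eq_zero.2 h2xN
          have hf1 : (moveM (p.filter (· ≠ 2 * x)) v w).filter (· ≠ 2 * x) =
              moveM (p.filter (· ≠ 2 * x)) v w := by
            rw [Multiset.filter_eq_self]
            intro a hamem
            intro haeq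
            rw [haeq] at hamem
            exact h2xN hamem
          have hf2 : (moveM (p.filter (· ≠ 2 * x)) v w).filter (· = 2 * x) = 0 := by
            rw [Multiset.filter_eq', hc0, Multiset.replicate_zero]
          rw [hf1, hf2, add_zero]
      -- assemble
      rw [hcol_p, hih1, ha, hcol_pf, hih2, add_assoc]
      congr 1
      rw [Multiset.filter_eq', Multiset.filter_eq', Multiset.filter_eq',
        hcnt2, hcntN, Multiset.replicate_add]

end Work


/-- Let `p` be a partition of `2n` and `x` a positive integer such
that `p` has a part equal to `2x`.  Then `p_C = (p_{>2x} ⊔ p_{<2x})_C ⊔ p_{=2x}`. -/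
theorem collapseC_remove_even_part (n x : ℕ) (hx : 0 < x)
    (p : Multiset ℕ) (hp : IsPartitionOf p (2 * n)) (hmem : 2 * x ∈ p) :
    collapse .C p =
      collapse .C (p.filter (fun y => y ≠ 2 * x)) + p.filter (fun y => y = 2 * x) := by
  have heven : Even p.sum := by rw [hp.2]; exact ⟨n, by omega⟩
  exact Work.main_step (Work.mu p + 1) p (by omega) hp.1 heven x hmem
end

section
/- Let p be a partition of 2n and x a positive integer such that p has at least one part equal to 2x+1. Let r := p_{>2x+1} ⊔ p_{<2x+1} (the partition obtained from p by removing all parts equal to 2x+1). Then p_D = r_X ⊔ p_{=2x+1}, where X = B if |r| is odd and X = D if |r| is even. -/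
open Multiset

/-! ### Auxiliary development for Statement 15 -/

namespace BVAux
open Multiset

/-- Excess function: `E p w = Σ_{x ∈ p} (x - w)⁺`. -/
def E (p : Multiset ℕ) (w : ℕ) : ℕ := (p.map (fun x => x - w)).sum

lemma E_add (p q : Multiset ℕ) (w : ℕ) : E (p + q) w = E p w + E q w := by
  simp [E]

lemma E_cons (x : ℕ) (p : Multiset ℕ) (w : ℕ) : E (x ::ₘ p) w = (x - w) + E p w := by
  simp [E]

lemma E_zero_level (p : Multiset ℕ) : E p 0 = p.sum := by
  simp [E]

lemma E_singleton (x w : ℕ) : E {x} w = x - w := by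
  simp [E]

lemma sortedD_coe (p : Multiset ℕ) : ((sortedD p : List ℕ) : Multiset ℕ) = p := by
  simp only [sortedD, Multiset.coe_reverse]
  exact Multiset.sort_eq p _

lemma sortedD_sorted (p : Multiset ℕ) : (sortedD p).Pairwise (· ≥ ·) := by
  simpa [sortedD, List.pairwise_reverse] using Multiset.pairwise_sort p (· ≤ ·)

lemma E_eq_list (p : Multiset ℕ) (w : ℕ) :
    E p w = ((sortedD p).map (fun x => x - w)).sum := by
  conv_lhs => rw [E, ← sortedD_coe p]
  simp

lemma sum_sortedD (p : Multiset ℕ) : (sortedD p).sum = p.sum := by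
  conv_rhs => rw [← sortedD_coe p]
  simp

lemma list_take_sum_le (w : ℕ) : ∀ (l : List ℕ) (k : ℕ),
    (l.take k).sum ≤ k * w + (l.map (fun x => x - w)).sum := by
  intro l
  induction l with
  | nil => intro k; simp
  | cons x xs ih =>
    intro k
    cases k with
    | zero => simp
    | succ k =>
      have := ih k
      simp only [List.take_succ_cons, List.sum_cons, List.map_cons]
      have hx : x ≤ w + (x - w) := by omega
      have hmul : (k + 1) * w = k * w + w := by ring
      omega

/-- In a sorted (non-increasing) list, the first `countP (· > w)` elements are
exactly the elements `> w`. -/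
lemma sorted_take_countP (w : ℕ) : ∀ (l : List ℕ), l.Pairwise (· ≥ ·) →
    l.take (l.countP (fun x => decide (x > w))) = l.filter (fun x => decide (x > w)) := by
  intro l
  induction l with
  | nil => simp
  | cons x xs ih =>
    intro hs
    by_cases hx : x > w
    · have hd : (fun x => decide (x > w)) x = true := by simpa using hx
      rw [List.countP_cons_of_pos (p := fun x => decide (x > w)) hd,
        List.filter_cons_of_pos (p := fun x => decide (x > w)) hd,
        List.take_succ_cons, ih hs.of_cons]
    · have hxs : ∀ y ∈ xs, ¬ (y > w) := by
        intro y hy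
        have := List.rel_of_pairwise_cons hs hy
        omega
      have h1 : (x :: xs).countP (fun x => decide (x > w)) = 0 := by
        rw [List.countP_eq_zero]
        intro y hy
        rcases List.mem_cons.mp hy with rfl | hy
        · simpa using hx
        · simpa using hxs y hy
      have h2 : (x :: xs).filter (fun x => decide (x > w)) = [] := by
        rw [List.filter_eq_nil_iff]
        intro y hy
        rcases List.mem_cons.mp hy with rfl | hy
        · simpa using hx
        · simpa using hxs y hy
      rw [h1, h2]
      simp

lemma filter_sum_eq (w : ℕ) (p : Multiset ℕ) :
    (p.filter (fun x => x > w)).sum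
      = E p w + Multiset.card (p.filter (fun x => x > w)) * w := by
  induction p using Multiset.induction with
  | empty => simp [E]
  | cons x p ih =>
    by_cases hx : x > w
    · rw [Multiset.filter_cons_of_pos (p := fun x => x > w) p hx,
        Multiset.sum_cons, Multiset.card_cons, E_cons]
      have hmul : (Multiset.card (Multiset.filter (fun x => x > w) p) + 1) * w
          = Multiset.card (Multiset.filter (fun x => x > w) p) * w + w := by ring
      omega
    · rw [Multiset.filter_cons_of_neg (p := fun x => x > w) p hx, E_cons]
      have : x - w = 0 := by omega
      omega

lemma topk_le (p : Multiset ℕ) (k w : ℕ) :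
    ((sortedD p).take k).sum ≤ k * w + E p w := by
  rw [E_eq_list]
  exact list_take_sum_le w (sortedD p) k

lemma card_filter_eq_countP (w : ℕ) (p : Multiset ℕ) :
    Multiset.card (p.filter (fun x => x > w)) = (sortedD p).countP (fun x => decide (x > w)) := by
  conv_lhs => rw [← sortedD_coe p]
  simp [Multiset.filter_coe, List.countP_eq_length_filter]

lemma filter_sum_eq_take (w : ℕ) (p : Multiset ℕ) :
    ((sortedD p).take (Multiset.card (p.filter (fun x => x > w)))).sum
      = (p.filter (fun x => x > w)).sum := by
  rw [card_filter_eq_countP, sorted_take_countP w _ (sortedD_sorted p)]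
  have h : (((sortedD p).filter (fun x => decide (x > w)) : List ℕ) : Multiset ℕ)
      = (p.filter (fun x => x > w)) := by
    conv_rhs => rw [← sortedD_coe p]
    simp [Multiset.filter_coe]
  calc ((sortedD p).filter (fun x => decide (x > w))).sum
      = (((sortedD p).filter (fun x => decide (x > w)) : List ℕ) : Multiset ℕ).sum := by simp
    _ = (p.filter (fun x => x > w)).sum := by rw [h]

lemma E_le_of_Dom {p q : Multiset ℕ} (h : Dom p q) (w : ℕ) : E q w ≤ E p w := by
  set u := Multiset.card (q.filter (fun x => x > w)) with hu
  have h1 : ((sortedD q).take u).sum = E q w + u * w := by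
    rw [filter_sum_eq_take, filter_sum_eq]
  have h2 := h u
  have h3 := topk_le p u w
  omega

end BVAux
namespace BVAux
open Multiset

lemma sorted_drop_le : ∀ (l : List ℕ), l.Pairwise (· ≥ ·) → ∀ (k : ℕ) (hk : k < l.length),
    ∀ x ∈ l.drop k, x ≤ l.get ⟨k, hk⟩ := by
  intro l
  induction l with
  | nil => intro _ k hk; simp at hk
  | cons a xs ih =>
    intro hs k hk
    cases k with
    | zero =>
      intro x hx
      simp only [List.drop_zero] at hx
      rcases List.mem_cons.mp hx with rfl | hx
      · simp
      · simpa using List.rel_of_pairwise_cons hs hx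
    | succ k =>
      intro x hx
      simp only [List.drop_succ_cons] at hx
      have hk' : k < xs.length := by simpa using hk
      simpa using ih hs.of_cons k hk' x hx

lemma sorted_take_ge : ∀ (l : List ℕ), l.Pairwise (· ≥ ·) → ∀ (k : ℕ) (hk : k < l.length),
    ∀ x ∈ l.take k, l.get ⟨k, hk⟩ ≤ x := by
  intro l
  induction l with
  | nil => intro _ k hk; simp at hk
  | cons a xs ih =>
    intro hs k hk
    cases k with
    | zero => intro x hx; simp at hx
    | succ k =>
      intro x hx
      simp only [List.take_succ_cons] at hx
      have hk' : k < xs.length := by simpa using hk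
      rcases List.mem_cons.mp hx with rfl | hx
      · have : xs.get ⟨k, hk'⟩ ∈ xs := List.get_mem xs ⟨k, hk'⟩
        have h2 := List.rel_of_pairwise_cons hs this
        simpa using h2
      · simpa using ih hs.of_cons k hk' x hx

lemma sum_map_sub_of_ge (w : ℕ) : ∀ (t : List ℕ), (∀ x ∈ t, w ≤ x) →
    (t.map (fun x => x - w)).sum + t.length * w = t.sum := by
  intro t
  induction t with
  | nil => simp
  | cons x xs ih =>
    intro h
    have hx : w ≤ x := h x (by simp)
    have ih' := ih (fun y hy => h y (by simp [hy]))
    simp only [List.map_cons, List.sum_cons, List.length_cons]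
    have : (xs.length + 1) * w = xs.length * w + w := by ring
    omega

lemma sum_map_sub_zero (w : ℕ) (t : List ℕ) (h : ∀ x ∈ t, x ≤ w) :
    (t.map (fun x => x - w)).sum = 0 := by
  apply List.sum_eq_zero
  intro y hy
  rcases List.mem_map.mp hy with ⟨x, hx, rfl⟩
  have := h x hx
  omega

lemma Dom_of_E {p q : Multiset ℕ} (h : ∀ w, E q w ≤ E p w) : Dom p q := by
  intro k
  by_cases hk : k < (sortedD p).length
  · set w := (sortedD p).get ⟨k, hk⟩ with hw
    have hEp : E p w = (((sortedD p).take k).map (fun x => x - w)).sum := by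
      rw [E_eq_list]
      conv_lhs => rw [← List.take_append_drop k (sortedD p)]
      rw [List.map_append, List.sum_append,
        sum_map_sub_zero w _ (sorted_drop_le _ (sortedD_sorted p) k hk)]
      omega
    have htake : (((sortedD p).take k).map (fun x => x - w)).sum + k * w
        = ((sortedD p).take k).sum := by
      have hlen : ((sortedD p).take k).length = k := by
        rw [List.length_take]
        omega
      have := sum_map_sub_of_ge w ((sortedD p).take k)
        (sorted_take_ge _ (sortedD_sorted p) k hk)
      rw [hlen] at this
      exact this
    have h1 : ((sortedD q).take k).sum ≤ k * w + E q w := topk_le q k w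
    have h2 := h w
    omega
  · push_neg at hk
    have h1 : ((sortedD q).take k).sum ≤ k * 0 + E q 0 := topk_le q k 0
    have h2 : ((sortedD p).take k).sum = p.sum := by
      rw [List.take_of_length_le hk, sum_sortedD]
    have h3 := h 0
    rw [E_zero_level] at h1
    rw [E_zero_level, E_zero_level] at h3
    omega

/-- The number of parts `> w`, recovered from `E`. -/
lemma E_succ (p : Multiset ℕ) (w : ℕ) :
    E p w = E p (w + 1) + Multiset.card (p.filter (fun x => x > w)) := by
  induction p using Multiset.induction with
  | empty => simp [E]
  | cons x s ih =>
    rw [E_cons, E_cons]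
    by_cases hx : x > w
    · rw [Multiset.filter_cons_of_pos (p := fun x => x > w) s hx, Multiset.card_cons]
      omega
    · rw [Multiset.filter_cons_of_neg (p := fun x => x > w) s hx]
      have h1 : x - w = 0 := by omega
      have h2 : x - (w + 1) = 0 := by omega
      omega

lemma card_filter_succ (p : Multiset ℕ) (w : ℕ) :
    Multiset.card (p.filter (fun x => x > w))
      = Multiset.card (p.filter (fun x => x > w + 1)) + p.count (w + 1) := by
  induction p using Multiset.induction with
  | empty => simp
  | cons x s ih =>
    by_cases hx : x > w
    · rw [Multiset.filter_cons_of_pos (p := fun x => x > w) s hx, Multiset.card_cons]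
      by_cases hx2 : x > w + 1
      · rw [Multiset.filter_cons_of_pos (p := fun x => x > w + 1) s hx2, Multiset.card_cons]
        rw [Multiset.count_cons_of_ne (by omega : (w + 1 : ℕ) ≠ x)]
        omega
      · rw [Multiset.filter_cons_of_neg (p := fun x => x > w + 1) s hx2]
        have heq : x = w + 1 := by omega
        subst heq
        rw [Multiset.count_cons_self]
        omega
    · rw [Multiset.filter_cons_of_neg (p := fun x => x > w) s hx,
        Multiset.filter_cons_of_neg (p := fun x => x > w + 1) s (by omega)]
      rw [Multiset.count_cons_of_ne (by omega : (w + 1 : ℕ) ≠ x)]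
      omega

lemma eq_of_E_eq {p q : Multiset ℕ} (h : ∀ w, E p w = E q w)
    (hp : ∀ x ∈ p, 0 < x) (hq : ∀ x ∈ q, 0 < x) : p = q := by
  have hcard : ∀ w, Multiset.card (p.filter (fun x => x > w))
      = Multiset.card (q.filter (fun x => x > w)) := by
    intro w
    have h1 := E_succ p w
    have h2 := E_succ q w
    have h3 := h w
    have h4 := h (w + 1)
    omega
  ext v
  cases v with
  | zero =>
    have h0p : p.count 0 = 0 := Multiset.count_eq_zero.mpr (fun hc => by simpa using hp 0 hc)
    have h0q : q.count 0 = 0 := Multiset.count_eq_zero.mpr (fun hc => by simpa using hq 0 hc)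
    rw [h0p, h0q]
  | succ w =>
    have h1 := card_filter_succ p w
    have h2 := card_filter_succ q w
    have h3 := hcard w
    have h4 := hcard (w + 1)
    omega

lemma Dom_refl (p : Multiset ℕ) : Dom p p := fun _ => le_refl _

end BVAux
namespace BVAux
open Multiset

lemma count_erase (v x : ℕ) (s : Multiset ℕ) :
    (s.erase x).count v = s.count v - (if v = x then 1 else 0) := by
  by_cases hx : x ∈ s
  · by_cases hvx : v = x
    · subst hvx
      simp [Multiset.count_erase_self]
    · simp [Multiset.count_erase_of_ne hvx, hvx]
  · rw [Multiset.erase_of_notMem hx]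
    by_cases hvx : v = x
    · subst hvx
      simp [Multiset.count_eq_zero.mpr hx]
    · simp [hvx]

/-- Data for one collapse step: `a` is the largest even part with odd multiplicity,
`b` is the largest even part `≤ a - 2` (or `0`). -/
structure StepData (p : Multiset ℕ) (a b : ℕ) : Prop where
  hpos : ∀ x ∈ p, 0 < x
  ha_even : Even a
  ha_count : ¬ Even (p.count a)
  ha_max : ∀ v, Even v → a < v → Even (p.count v)
  hb : b = 0 ∨ b ∈ p
  hb_even : Even b
  hab : b + 2 ≤ a
  hgap : ∀ v, Even v → b < v → v < a → v ∉ p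

/-- One collapse step: replace parts `a, b` by `a - 1, b + 1`. -/
def stepM (p : Multiset ℕ) (a b : ℕ) : Multiset ℕ :=
  ((p + {a - 1, b + 1}).erase a).erase b

def mu (p : Multiset ℕ) : ℕ := (p.map (fun x => x * x)).sum

lemma mu_add (p q : Multiset ℕ) : mu (p + q) = mu p + mu q := by
  simp [mu]

namespace StepData

variable {p : Multiset ℕ} {a b : ℕ}

lemma ha_mem (sd : StepData p a b) : a ∈ p := by
  have h := sd.ha_count
  have : p.count a ≠ 0 := fun h0 => h (h0 ▸ Even.zero)
  exact Multiset.count_pos.mp (Nat.pos_of_ne_zero this)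

lemma master (sd : StepData p a b) :
    stepM p a b + {a, b} = p + {a - 1, b + 1} + (if b = 0 then ({0} : Multiset ℕ) else 0) := by
  have hab := sd.hab
  rcases sd.hb with hb0 | hbm
  · subst hb0
    rw [if_pos rfl, stepM]
    have h0 : (0 : ℕ) ∉ (p + {a - 1, 0 + 1}).erase a := by
      intro h
      have h2 := Multiset.mem_of_mem_erase h
      rcases Multiset.mem_add.mp h2 with h3 | h3
      · exact absurd (sd.hpos 0 h3) (by omega)
      · simp only [Multiset.insert_eq_cons, Multiset.mem_cons, Multiset.mem_singleton] at h3
        omega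
    rw [Multiset.erase_of_notMem h0, Multiset.erase_add_left_pos _ sd.ha_mem]
    conv_rhs => rw [← Multiset.cons_erase sd.ha_mem]
    simp only [Multiset.insert_eq_cons, ← Multiset.singleton_add]
    abel
  · have hbne0 : b ≠ 0 := by
      have := sd.hpos b hbm
      omega
    rw [if_neg hbne0, stepM, Multiset.erase_add_left_pos _ sd.ha_mem]
    have hbmem : b ∈ p.erase a := by
      rw [Multiset.mem_erase_of_ne (by omega : b ≠ a)]
      exact hbm
    rw [Multiset.erase_add_left_pos _ hbmem, add_zero]
    have h1 : p = a ::ₘ (p.erase a) := (Multiset.cons_erase sd.ha_mem).symm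
    have h2 : p.erase a = b ::ₘ ((p.erase a).erase b) := (Multiset.cons_erase hbmem).symm
    conv_rhs => rw [h1, h2]
    simp only [Multiset.insert_eq_cons, ← Multiset.singleton_add]
    abel

lemma E_step (sd : StepData p a b) (w : ℕ) :
    E (stepM p a b) w + (a - w) + (b - w) = E p w + (a - 1 - w) + (b + 1 - w) := by
  have hm := congrArg (fun s => E s w) sd.master
  rw [E_add, E_add, E_add] at hm
  have hab : E ({a, b} : Multiset ℕ) w = (a - w) + (b - w) := by
    show E (a ::ₘ {b}) w = _
    rw [E_cons, E_singleton]
  have hX : E ({a - 1, b + 1} : Multiset ℕ) w = (a - 1 - w) + (b + 1 - w) := by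
    show E ((a - 1) ::ₘ {b + 1}) w = _
    rw [E_cons, E_singleton]
  have hite : E (if b = 0 then ({0} : Multiset ℕ) else 0) w = 0 := by
    split_ifs <;> simp [E]
  rw [hab, hX, hite] at hm
  omega

lemma sum_step (sd : StepData p a b) : (stepM p a b).sum = p.sum := by
  have h := sd.E_step 0
  have hab := sd.hab
  simp only [Nat.sub_zero, E_zero_level] at h
  omega

lemma mu_master (sd : StepData p a b) :
    mu (stepM p a b) + (a * a + b * b)
      = mu p + ((a - 1) * (a - 1) + (b + 1) * (b + 1)) := by
  have hm := congrArg mu sd.master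
  rw [mu_add, mu_add, mu_add] at hm
  have h1 : mu ({a, b} : Multiset ℕ) = a * a + b * b := by
    show mu (a ::ₘ {b}) = _
    simp [mu]
  have h2 : mu ({a - 1, b + 1} : Multiset ℕ) = (a - 1) * (a - 1) + (b + 1) * (b + 1) := by
    show mu ((a - 1) ::ₘ {b + 1}) = _
    simp [mu]
  have h3 : mu (if b = 0 then ({0} : Multiset ℕ) else 0) = 0 := by
    split_ifs <;> simp [mu]
  rw [h1, h2, h3] at hm
  omega

lemma mu_lt (sd : StepData p a b) : mu (stepM p a b) < mu p := by
  have hm := sd.mu_master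
  have hab := sd.hab
  obtain ⟨a', rfl⟩ : ∃ a', a = a' + 1 := ⟨a - 1, by omega⟩
  have e1 : a' + 1 - 1 = a' := by omega
  rw [e1] at hm
  have e2 : (a' + 1) * (a' + 1) = a' * a' + 2 * a' + 1 := by ring
  have e3 : (b + 1) * (b + 1) = b * b + 2 * b + 1 := by ring
  omega

lemma pos_step (sd : StepData p a b) : ∀ x ∈ stepM p a b, 0 < x := by
  intro x hx
  have h1 := Multiset.mem_of_mem_erase (Multiset.mem_of_mem_erase hx)
  rcases Multiset.mem_add.mp h1 with h2 | h2
  · exact sd.hpos x h2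
  · simp only [Multiset.insert_eq_cons, Multiset.mem_cons, Multiset.mem_singleton] at h2
    have hab := sd.hab
    omega

lemma E_step_le (sd : StepData p a b) (w : ℕ) : E (stepM p a b) w ≤ E p w := by
  have := sd.E_step w
  have hab := sd.hab
  omega

lemma E_step_outside (sd : StepData p a b) (w : ℕ) (hw : w ≤ b ∨ a ≤ w) :
    E (stepM p a b) w = E p w := by
  have := sd.E_step w
  have hab := sd.hab
  omega

lemma E_step_inside (sd : StepData p a b) (w : ℕ) (hw1 : b + 1 ≤ w) (hw2 : w ≤ a - 1) :
    E (stepM p a b) w + 1 = E p w := by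
  have := sd.E_step w
  have hab := sd.hab
  omega

end StepData

end BVAux
namespace BVAux
open Multiset

/-- A multiset in which every multiplicity is even has even cardinality. -/
lemma even_card_of_even_counts (t : Multiset ℕ) (h : ∀ v, Even (t.count v)) :
    Even (Multiset.card t) := by
  rw [← Multiset.toFinset_sum_count_eq, even_iff_two_dvd]
  refine Finset.dvd_sum ?_
  intro v _
  exact even_iff_two_dvd.mp (h v)

/-- Parity of the excess at an odd level. -/
lemma E_parity (w : ℕ) (hw : Odd w) (p : Multiset ℕ) :
    E p w % 2 = Multiset.card (p.filter (fun x => Even x ∧ w < x)) % 2 := by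
  induction p using Multiset.induction with
  | empty => simp [E]
  | cons x s ih =>
    rw [E_cons]
    by_cases hx : Even x ∧ w < x
    · rw [Multiset.filter_cons_of_pos (p := fun x => Even x ∧ w < x) s hx, Multiset.card_cons]
      have hodd : (x - w) % 2 = 1 := by
        obtain ⟨u, hu⟩ := hx.1
        obtain ⟨v, hv⟩ := hw
        omega
      omega
    · rw [Multiset.filter_cons_of_neg (p := fun x => Even x ∧ w < x) s hx]
      have heven : (x - w) % 2 = 0 := by
        by_cases hlt : w < x
        · have hox : ¬ Even x := fun he => hx ⟨he, hlt⟩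
          rw [Nat.not_even_iff_odd] at hox
          obtain ⟨u, hu⟩ := hox
          obtain ⟨v, hv⟩ := hw
          omega
        · omega
      omega

/-- Type-`D` partitions have even excess at every odd level. -/
lemma E_even_of_typeD {q : Multiset ℕ} (hq : OfType .D q) (w : ℕ) (hw : Odd w) :
    Even (E q w) := by
  have h1 := E_parity w hw q
  have h2 : Even (Multiset.card (q.filter (fun x => Even x ∧ w < x))) := by
    apply even_card_of_even_counts
    intro v
    rw [Multiset.count_filter]
    split_ifs with hv
    · exact hq v hv.1
    · exact Even.zero
  rw [Nat.even_iff] at h2 ⊢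
  omega

/-- Under `StepData`, the excess of `p` at odd levels in `[b, a-1]` is odd. -/
lemma E_odd_of_step {p : Multiset ℕ} {a b : ℕ} (sd : StepData p a b)
    (w : ℕ) (hw : Odd w) (hw1 : b ≤ w) (hw2 : w < a) : ¬ Even (E p w) := by
  have h1 := E_parity w hw p
  -- split the filtered multiset into the parts equal to `a` and the rest
  have hsplit : p.filter (fun x => Even x ∧ w < x)
      = p.filter (fun x => (Even x ∧ w < x) ∧ x = a)
        + p.filter (fun x => (Even x ∧ w < x) ∧ ¬ x = a) := by
    rw [Multiset.filter_add_filter]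
    have h2 : p.filter (fun x => ((Even x ∧ w < x) ∧ x = a) ∧ (Even x ∧ w < x) ∧ ¬x = a) = 0 := by
      rw [Multiset.filter_eq_nil]
      tauto
    rw [h2, add_zero]
    apply Multiset.filter_congr
    tauto
  have hcount_a : p.filter (fun x => (Even x ∧ w < x) ∧ x = a)
      = p.filter (fun x => x = a) := by
    apply Multiset.filter_congr
    intro x hx
    constructor
    · tauto
    · intro hxa
      exact ⟨⟨hxa ▸ sd.ha_even, hxa ▸ hw2⟩, hxa⟩
  have hcard_a : Multiset.card (p.filter (fun x => x = a)) = p.count a := by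
    rw [Multiset.count, Multiset.countP_eq_card_filter]
    congr 1
    apply Multiset.filter_congr
    intro x _
    exact eq_comm
  have heven_rest : Even (Multiset.card
      (p.filter (fun x => (Even x ∧ w < x) ∧ ¬ x = a))) := by
    apply even_card_of_even_counts
    intro v
    rw [Multiset.count_filter]
    split_ifs with hv
    · obtain ⟨⟨hv_even, hv_gt⟩, hv_ne⟩ := hv
      rcases lt_or_gt_of_ne hv_ne with hlt | hgt
      · have : v ∉ p := sd.hgap v hv_even (by omega) hlt
        simp [Multiset.count_eq_zero.mpr this]
      · exact sd.ha_max v hv_even hgt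
    · exact Even.zero
  have hodd_a : ¬ Even (p.count a) := sd.ha_count
  rw [hsplit, Multiset.card_add, hcount_a, hcard_a] at h1
  rw [Nat.even_iff] at heven_rest ⊢
  rw [Nat.not_even_iff] at hodd_a
  omega

/-- Convexity of `E` in the level. -/
lemma E_convex (q : Multiset ℕ) (w : ℕ) (hw : 1 ≤ w) :
    2 * E q w ≤ E q (w - 1) + E q (w + 1) := by
  induction q using Multiset.induction with
  | empty => simp [E]
  | cons x s ih =>
    rw [E_cons, E_cons, E_cons]
    have : 2 * (x - w) ≤ (x - (w - 1)) + (x - (w + 1)) := by omega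
    omega

/-- Linearity of `E` at a level that is not a part. -/
lemma E_linear (p : Multiset ℕ) (w : ℕ) (hw : 1 ≤ w) (hnp : w ∉ p) :
    E p (w - 1) + E p (w + 1) ≤ 2 * E p w := by
  induction p using Multiset.induction with
  | empty => simp [E]
  | cons x s ih =>
    have hxw : x ≠ w := fun h => hnp (h ▸ Multiset.mem_cons_self x s)
    have hs : w ∉ s := fun h => hnp (Multiset.mem_cons_of_mem h)
    have ih' := ih hs
    rw [E_cons, E_cons, E_cons]
    have : (x - (w - 1)) + (x - (w + 1)) ≤ 2 * (x - w) := by omega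
    omega

/-- **Master Lemma**: every type-`D` multiset dominated by `p` is dominated by the
step of `p`. -/
lemma master_lemma {p : Multiset ℕ} {a b : ℕ} (sd : StepData p a b)
    {q : Multiset ℕ} (hq : OfType .D q) (hd : ∀ w, E q w ≤ E p w) :
    ∀ w, E q w ≤ E (stepM p a b) w := by
  intro w
  have hab := sd.hab
  rcases (by omega : w ≤ b ∨ a ≤ w ∨ (b + 1 ≤ w ∧ w ≤ a - 1)) with hw | hw | ⟨hw1, hw2⟩
  · rw [sd.E_step_outside w (Or.inl hw)]; exact hd w
  · rw [sd.E_step_outside w (Or.inr hw)]; exact hd w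
  · have hgoal : E q w + 1 ≤ E p w := by
      rcases Nat.even_or_odd w with hwe | hwo
      · -- even level: use convexity/linearity and the odd neighbours
        have hw0 : 1 ≤ w := by omega
        have hwm1 : Odd (w - 1) := by
          obtain ⟨u, hu⟩ := hwe
          exact ⟨u - 1, by omega⟩
        have hwp1 : Odd (w + 1) := by
          obtain ⟨u, hu⟩ := hwe
          exact ⟨u, by omega⟩
        have hlt : w + 1 < a := by
          obtain ⟨u, hu⟩ := hwe
          obtain ⟨v, hv⟩ := sd.ha_even
          omega
        have h1 : E q (w - 1) + 1 ≤ E p (w - 1) := by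
          have he := E_even_of_typeD hq (w - 1) hwm1
          have ho := E_odd_of_step sd (w - 1) hwm1 (by omega) (by omega)
          have hle := hd (w - 1)
          rw [Nat.even_iff] at he
          rw [Nat.not_even_iff] at ho
          omega
        have h2 : E q (w + 1) + 1 ≤ E p (w + 1) := by
          have he := E_even_of_typeD hq (w + 1) hwp1
          have ho := E_odd_of_step sd (w + 1) hwp1 (by omega) hlt
          have hle := hd (w + 1)
          rw [Nat.even_iff] at he
          rw [Nat.not_even_iff] at ho
          omega
        have hcx := E_convex q w hw0
        have hnp : w ∉ p := sd.hgap w hwe (by omega) (by omega)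
        have hlin := E_linear p w hw0 hnp
        omega
      · -- odd level: parity contradiction
        have he := E_even_of_typeD hq w hwo
        have ho := E_odd_of_step sd w hwo (by omega) (by omega)
        have hle := hd w
        rw [Nat.even_iff] at he
        rw [Nat.not_even_iff] at ho
        omega
    have := sd.E_step_inside w hw1 hw2
    omega

end BVAux
namespace BVAux
open Multiset

lemma exists_stepData {p : Multiset ℕ} (hpos : ∀ x ∈ p, 0 < x) (hD : ¬ OfType .D p) :
    ∃ a b, StepData p a b := by
  have hex : ∃ x, Even x ∧ ¬ Even (p.count x) := by
    by_contra h
    push_neg at h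
    exact hD (fun x hx => h x hx)
  set S : Finset ℕ := p.toFinset.filter (fun v => Even v ∧ ¬ Even (p.count v)) with hS
  have hSne : S.Nonempty := by
    obtain ⟨x, hx1, hx2⟩ := hex
    refine ⟨x, ?_⟩
    rw [hS, Finset.mem_filter, Multiset.mem_toFinset]
    have hxm : x ∈ p := by
      rw [← Multiset.count_pos]
      rcases Nat.eq_zero_or_pos (p.count x) with h0 | h0
      · exact absurd (h0 ▸ Even.zero) hx2
      · exact h0
    exact ⟨hxm, hx1, hx2⟩
  set a := S.max' hSne with ha
  have haS : a ∈ S := S.max'_mem hSne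
  rw [hS, Finset.mem_filter, Multiset.mem_toFinset] at haS
  obtain ⟨ham, hae, hac⟩ := haS
  have ha2 : 2 ≤ a := by
    have := hpos a ham
    obtain ⟨u, hu⟩ := hae
    omega
  set T : Finset ℕ := p.toFinset.filter (fun v => Even v ∧ v + 2 ≤ a) with hT
  set b := T.sup id with hb
  have hbub : ∀ v ∈ T, v ≤ b := fun v hv => Finset.le_sup (f := id) hv
  have hbT : b = 0 ∨ b ∈ T := by
    rcases T.eq_empty_or_nonempty with hTe | hTne
    · left; rw [hb, hTe]; rfl
    · right
      obtain ⟨v, hv, he⟩ := Finset.exists_mem_eq_sup T hTne id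
      rw [hb, he]
      exact hv
  have hbmem : b = 0 ∨ b ∈ p := by
    rcases hbT with h | h
    · exact Or.inl h
    · right
      rw [hT, Finset.mem_filter, Multiset.mem_toFinset] at h
      exact h.1
  have hbeven : Even b := by
    rcases hbT with h | h
    · rw [h]; exact Even.zero
    · rw [hT, Finset.mem_filter] at h
      exact h.2.1
  have hble : b + 2 ≤ a := by
    rcases hbT with h | h
    · omega
    · rw [hT, Finset.mem_filter] at h
      omega
  refine ⟨a, b, ?_, hae, hac, ?_, hbmem, hbeven, hble, ?_⟩
  · exact hpos
  · -- maximality of a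
    intro v hv hav
    by_contra hvc
    have hvm : v ∈ p := by
      rw [← Multiset.count_pos]
      rcases Nat.eq_zero_or_pos (p.count v) with h0 | h0
      · exact absurd (h0 ▸ Even.zero) hvc
      · exact h0
    have hvS : v ∈ S := by
      rw [hS, Finset.mem_filter, Multiset.mem_toFinset]
      exact ⟨hvm, hv, hvc⟩
    have := S.le_max' v hvS
    omega
  · -- gap property
    intro v hv hbv hva hvm
    have hv2 : v + 2 ≤ a := by
      obtain ⟨u, hu⟩ := hv
      obtain ⟨u', hu'⟩ := hae
      omega
    have hvT : v ∈ T := by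
      rw [hT, Finset.mem_filter, Multiset.mem_toFinset]
      exact ⟨hvm, hv, hv2⟩
    have := hbub v hvT
    omega

lemma isCollapse_self {p : Multiset ℕ} (hpos : ∀ x ∈ p, 0 < x) (hD : OfType .D p) :
    IsCollapse .D p p :=
  ⟨⟨hpos, rfl⟩, hD, Dom_refl p, fun _ _ _ h => h⟩

lemma isCollapse_unique {X : PType} {p q₁ q₂ : Multiset ℕ}
    (h₁ : IsCollapse X p q₁) (h₂ : IsCollapse X p q₂) : q₁ = q₂ := by
  obtain ⟨hpart₁, hty₁, hdom₁, hmax₁⟩ := h₁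
  obtain ⟨hpart₂, hty₂, hdom₂, hmax₂⟩ := h₂
  have d12 : Dom q₁ q₂ := hmax₁ q₂ hpart₂ hty₂ hdom₂
  have d21 : Dom q₂ q₁ := hmax₂ q₁ hpart₁ hty₁ hdom₁
  apply eq_of_E_eq (fun w => le_antisymm (E_le_of_Dom d21 w) (E_le_of_Dom d12 w))
    hpart₁.1 hpart₂.1

lemma collapse_eq_of_isCollapse {X : PType} {p q : Multiset ℕ} (h : IsCollapse X p q) :
    collapse X p = q := by
  rw [collapse]
  have hex : ∃ q, IsCollapse X p q := ⟨q, h⟩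
  rw [dif_pos hex]
  exact isCollapse_unique hex.choose_spec h

/-- Transfer of the collapse across one step. -/
lemma isCollapse_step {p : Multiset ℕ} {a b : ℕ} (sd : StepData p a b)
    {q : Multiset ℕ} (h : IsCollapse .D (stepM p a b) q) : IsCollapse .D p q := by
  obtain ⟨hpart, hty, hdom, hmax⟩ := h
  have hsum := sd.sum_step
  refine ⟨by rw [← hsum]; exact hpart, hty, ?_, ?_⟩
  · -- Dom p q
    apply Dom_of_E
    intro w
    exact le_trans (E_le_of_Dom hdom w) (sd.E_step_le w)
  · intro r hr hrty hrdom
    apply hmax r (by rw [hsum]; exact hr) hrty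
    apply Dom_of_E
    exact master_lemma sd hrty (E_le_of_Dom hrdom)

/-- Existence of the `D`-collapse. -/
lemma exists_collapseD : ∀ (n : ℕ) (p : Multiset ℕ), mu p ≤ n → (∀ x ∈ p, 0 < x) →
    ∃ q, IsCollapse .D p q := by
  intro n
  induction n with
  | zero =>
    intro p hmu hpos
    by_cases hD : OfType .D p
    · exact ⟨p, isCollapse_self hpos hD⟩
    · obtain ⟨a, b, sd⟩ := exists_stepData hpos hD
      have ham := sd.ha_mem
      have h1 : a * a ∈ p.map (fun x => x * x) := Multiset.mem_map_of_mem _ ham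
      have h2 : a * a ≤ mu p := Multiset.single_le_sum (fun y _ => Nat.zero_le y) _ h1
      have := sd.hab
      have ha2 : 2 ≤ a := by
        have := sd.hpos a ham
        obtain ⟨u, hu⟩ := sd.ha_even
        omega
      have : 1 ≤ a * a := Nat.one_le_iff_ne_zero.mpr (by positivity)
      omega
  | succ n ih =>
    intro p hmu hpos
    by_cases hD : OfType .D p
    · exact ⟨p, isCollapse_self hpos hD⟩
    · obtain ⟨a, b, sd⟩ := exists_stepData hpos hD
      have hlt := sd.mu_lt
      obtain ⟨q, hq⟩ := ih (stepM p a b) (by omega) sd.pos_step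
      exact ⟨q, isCollapse_step sd hq⟩

end BVAux
namespace BVAux
open Multiset

lemma filter_ne_add_eq (c : ℕ) (p : Multiset ℕ) :
    p.filter (fun y => y ≠ c) + p.filter (fun y => y = c) = p := by
  have h := Multiset.filter_add_not (fun y => y ≠ c) p
  rw [Multiset.filter_congr (fun x _ => not_not (a := x = c))] at h
  exact h

lemma collapse_step_eq {p : Multiset ℕ} {a b : ℕ} (sd : StepData p a b) :
    collapse .D p = collapse .D (stepM p a b) := by
  obtain ⟨q, hq⟩ := exists_collapseD (mu (stepM p a b)) (stepM p a b) le_rfl sd.pos_step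
  rw [collapse_eq_of_isCollapse hq, collapse_eq_of_isCollapse (isCollapse_step sd hq)]

lemma stepData_filter {p : Multiset ℕ} {a b c : ℕ} (hc : Odd c) (sd : StepData p a b) :
    StepData (p.filter (fun y => y ≠ c)) a b := by
  have hcnt : ∀ v, Even v → (p.filter (fun y => y ≠ c)).count v = p.count v := by
    intro v hv
    rw [Multiset.count_filter, if_pos]
    rintro rfl
    exact (Nat.not_even_iff_odd.mpr hc) hv
  refine ⟨fun x hx => sd.hpos x (Multiset.mem_of_mem_filter hx), sd.ha_even, ?_, ?_, ?_,
    sd.hb_even, sd.hab, ?_⟩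
  · rw [hcnt a sd.ha_even]
    exact sd.ha_count
  · intro v hv hav
    rw [hcnt v hv]
    exact sd.ha_max v hv hav
  · rcases sd.hb with h | h
    · exact Or.inl h
    · right
      rw [Multiset.mem_filter]
      refine ⟨h, ?_⟩
      rintro rfl
      exact (Nat.not_even_iff_odd.mpr hc) sd.hb_even
  · intro v hv h1 h2 hvm
    exact sd.hgap v hv h1 h2 (Multiset.mem_of_mem_filter hvm)

lemma step_filter_eq {p : Multiset ℕ} {a b c : ℕ} (hc : Odd c) (sd : StepData p a b) :
    stepM p a b = stepM (p.filter (fun y => y ≠ c)) a b + p.filter (fun y => y = c) := by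
  have sd' := stepData_filter hc sd
  set r := p.filter (fun y => y ≠ c) with hr
  set cs := p.filter (fun y => y = c) with hcs
  have hcsc : ∀ x ∈ cs, x = c := fun x hx => (Multiset.mem_filter.mp hx).2
  have hsplit : r + cs = p := filter_ne_add_eq c p
  have hc1 : 1 ≤ c := by
    obtain ⟨u, hu⟩ := hc
    omega
  have h1 : p + ({a - 1, b + 1} : Multiset ℕ) = (r + {a - 1, b + 1}) + cs := by
    rw [← hsplit]
    abel
  have hamem : a ∈ r + ({a - 1, b + 1} : Multiset ℕ) := Multiset.mem_add.mpr (Or.inl sd'.ha_mem)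
  rw [stepM, stepM, h1, Multiset.erase_add_left_pos cs hamem]
  have hposInner : ∀ x ∈ (r + ({a - 1, b + 1} : Multiset ℕ)).erase a, 0 < x := by
    intro x hx
    have h2 := Multiset.mem_of_mem_erase hx
    rcases Multiset.mem_add.mp h2 with h3 | h3
    · exact sd'.hpos x h3
    · simp only [Multiset.insert_eq_cons, Multiset.mem_cons, Multiset.mem_singleton] at h3
      have := sd.hab
      omega
  rcases sd.hb with hb0 | hbm
  · subst hb0
    have h0L : (0 : ℕ) ∉ (r + ({a - 1, 0 + 1} : Multiset ℕ)).erase a + cs := by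
      intro h
      rcases Multiset.mem_add.mp h with h2 | h2
      · exact absurd (hposInner 0 h2) (by omega)
      · have := hcsc 0 h2
        omega
    have h0R : (0 : ℕ) ∉ (r + ({a - 1, 0 + 1} : Multiset ℕ)).erase a := by
      intro h
      exact absurd (hposInner 0 h) (by omega)
    rw [Multiset.erase_of_notMem h0L, Multiset.erase_of_notMem h0R]
  · have hbne : b ≠ c := by
      rintro rfl
      exact (Nat.not_even_iff_odd.mpr hc) sd.hb_even
    have hbr : b ∈ r := by
      rw [hr, Multiset.mem_filter]
      exact ⟨hbm, hbne⟩
    have hbmem : b ∈ (r + ({a - 1, b + 1} : Multiset ℕ)).erase a := by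
      rw [Multiset.mem_erase_of_ne (by have := sd.hab; omega : b ≠ a)]
      exact Multiset.mem_add.mpr (Or.inl hbr)
    rw [Multiset.erase_add_left_pos cs hbmem]

/-- Main induction: the `D`-collapse splits off the parts equal to an odd number `c`. -/
lemma collapse_filter_split (c : ℕ) (hc : Odd c) :
    ∀ (n : ℕ) (p : Multiset ℕ), mu p ≤ n → (∀ x ∈ p, 0 < x) →
      collapse .D p
        = collapse .D (p.filter (fun y => y ≠ c)) + p.filter (fun y => y = c) := by
  have key : ∀ (n : ℕ), (∀ (m : ℕ) (p : Multiset ℕ), m < n → mu p ≤ m → (∀ x ∈ p, 0 < x) →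
      collapse .D p = collapse .D (p.filter (fun y => y ≠ c)) + p.filter (fun y => y = c)) →
      ∀ (p : Multiset ℕ), mu p ≤ n → (∀ x ∈ p, 0 < x) →
      collapse .D p = collapse .D (p.filter (fun y => y ≠ c)) + p.filter (fun y => y = c) := by
    intro n ih p hmu hpos
    by_cases hD : OfType .D p
    · have hrpos : ∀ x ∈ p.filter (fun y => y ≠ c), 0 < x :=
        fun x hx => hpos x (Multiset.mem_of_mem_filter hx)
      have hrty : OfType .D (p.filter (fun y => y ≠ c)) := by
        intro v hv
        rw [Multiset.count_filter]
        split_ifs with h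
        · exact hD v hv
        · exact Even.zero
      rw [collapse_eq_of_isCollapse (isCollapse_self hpos hD),
        collapse_eq_of_isCollapse (isCollapse_self hrpos hrty), filter_ne_add_eq]
    · by_cases hcs0 : p.filter (fun y => y = c) = 0
      · have hrp : p.filter (fun y => y ≠ c) = p := by
          have h := filter_ne_add_eq c p
          rw [hcs0, add_zero] at h
          exact h
        rw [hcs0, hrp, add_zero]
      · obtain ⟨a, b, sd⟩ := exists_stepData hpos hD
        have sd' := stepData_filter hc sd
        have hstep := step_filter_eq hc sd
        set r := p.filter (fun y => y ≠ c) with hr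
        set cs := p.filter (fun y => y = c) with hcseq
        have hcsc : ∀ x ∈ cs, x = c := fun x hx => (Multiset.mem_filter.mp hx).2
        have hrsplit : r + cs = p := filter_ne_add_eq c p
        have hc1 : 1 ≤ c := by
          obtain ⟨u, hu⟩ := hc
          omega
        have hmu_cs : 1 ≤ mu cs := by
          obtain ⟨y, hy⟩ := Multiset.exists_mem_of_ne_zero hcs0
          have hyc := hcsc y hy
          subst hyc
          have h1 : y * y ∈ cs.map (fun x => x * x) := Multiset.mem_map_of_mem _ hy
          have h2 : y * y ≤ mu cs := Multiset.single_le_sum (fun z _ => Nat.zero_le z) _ h1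
          have : 1 ≤ y * y := Nat.one_le_iff_ne_zero.mpr (by positivity)
          omega
        have hmu_split : mu r + mu cs = mu p := by
          rw [← hrsplit, mu_add]
        have hmu_p : mu (stepM p a b) < n := by
          have := sd.mu_lt
          omega
        have hmu_r : mu (stepM r a b) < n := by
          have := sd'.mu_lt
          omega
        have ih_p := ih (mu (stepM p a b)) (stepM p a b) hmu_p le_rfl sd.pos_step
        have ih_r := ih (mu (stepM r a b)) (stepM r a b) hmu_r le_rfl sd'.pos_step
        have hf0 : cs.filter (fun y => y ≠ c) = 0 := by
          rw [Multiset.filter_eq_nil]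
          intro y hy
          rw [not_not]
          exact hcsc y hy
        have hfs : cs.filter (fun y => y = c) = cs := Multiset.filter_eq_self.mpr hcsc
        have hf1 : (stepM p a b).filter (fun y => y ≠ c)
            = (stepM r a b).filter (fun y => y ≠ c) := by
          rw [hstep, Multiset.filter_add, hf0, add_zero]
        have hf2 : (stepM p a b).filter (fun y => y = c)
            = (stepM r a b).filter (fun y => y = c) + cs := by
          rw [hstep, Multiset.filter_add, hfs]
        calc collapse .D p = collapse .D (stepM p a b) := collapse_step_eq sd
          _ = collapse .D ((stepM p a b).filter (fun y => y ≠ c))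
              + (stepM p a b).filter (fun y => y = c) := ih_p
          _ = collapse .D ((stepM r a b).filter (fun y => y ≠ c))
              + ((stepM r a b).filter (fun y => y = c) + cs) := by rw [hf1, hf2]
          _ = (collapse .D ((stepM r a b).filter (fun y => y ≠ c))
              + (stepM r a b).filter (fun y => y = c)) + cs := by rw [add_assoc]
          _ = collapse .D (stepM r a b) + cs := by rw [← ih_r]
          _ = collapse .D r + cs := by rw [← collapse_step_eq sd']
  intro n
  induction n using Nat.strong_induction_on with
  | _ n ih =>
    exact key n (fun m p hm hmu hpos => ih m hm p hmu hpos)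

end BVAux
/-- Let `p` be a partition of `2n` and `x` a positive integer such
that `p` has a part equal to `2x+1`.  Let `r := p_{>2x+1} ⊔ p_{<2x+1}` be the partition
obtained by removing all parts equal to `2x+1`.  Then `p_D = r_X ⊔ p_{=2x+1}`, with
`X = B` if `|r|` is odd and `X = D` if `|r|` is even. -/
theorem collapseD_remove_odd_part (n x : ℕ) (hx : 0 < x)
    (p : Multiset ℕ) (hp : IsPartitionOf p (2 * n)) (hmem : 2 * x + 1 ∈ p) :
    collapse .D p =
      (if Odd (p.filter (fun y => y ≠ 2 * x + 1)).sum then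
          collapse .B (p.filter (fun y => y ≠ 2 * x + 1))
        else collapse .D (p.filter (fun y => y ≠ 2 * x + 1))) +
      p.filter (fun y => y = 2 * x + 1) := by
  have hBD : collapse .B = collapse .D := rfl
  rw [hBD, ite_self]
  exact BVAux.collapse_filter_split (2 * x + 1) ⟨x, rfl⟩ (BVAux.mu p) p le_rfl hp.1
end

section
/- Let x be a positive integer and p a partition of 2n. If |p_{>x}| is even, then p_C = (p_{>x})_C ⊔ (p_{≤x})_C; if |p_{>x}| is odd, then p_C = ((p_{>x})^-)_C ⊔ ((p_{≤x})^+)_C. -/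
open Multiset

section CollapseAuxSec
namespace CollapseAux



/-- the "epsilon" at a boundary: running sum `S`, current part `a`, next part `h`. -/
def epsB (S a h : ℕ) : ℕ := if S % 2 = 1 ∧ ¬(a = h ∧ a % 2 = 1) then 1 else 0

/-- The C-collapse of a sorted (non-increasing) list, with carry `c` and
accumulated sum `s`. -/
def cCL : ℕ → ℕ → List ℕ → List ℕ
  | _, _, [] => []
  | c, s, a :: t => (a + c - epsB (s + a) a t.headI) :: cCL (epsB (s + a) a t.headI) (s + a) t

def epsL : ℕ → List ℕ → ℕ → ℕ
  | _, [], _ => 0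
  | _, _ :: _, 0 => 0
  | s, a :: t, 1 => epsB (s + a) a t.headI
  | s, a :: t, (k+2) => epsL (s + a) t (k+1)

lemma epsB_le_one (S a h : ℕ) : epsB S a h ≤ 1 := by
  unfold epsB; split <;> omega

lemma epsB_of_even (S a h : ℕ) (hS : S % 2 = 0) : epsB S a h = 0 := by
  unfold epsB; split <;> omega

lemma epsB_le_parity (S a h : ℕ) : epsB S a h ≤ S % 2 := by
  unfold epsB; split <;> omega

lemma epsB_congr (S S' a h : ℕ) (hp : S % 2 = S' % 2) : epsB S a h = epsB S' a h := by
  unfold epsB; rw [hp]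

lemma epsB_inv (S a h : ℕ) (hS : S % 2 = 1) (hh : h % 2 = 0) : epsB S a h = 1 := by
  unfold epsB
  rw [if_pos]
  refine ⟨hS, ?_⟩
  rintro ⟨rfl, h2⟩; omega

lemma cCL_parity (l : List ℕ) : ∀ c s s', s % 2 = s' % 2 → cCL c s l = cCL c s' l := by
  induction l with
  | nil => intros; rfl
  | cons a t ih =>
    intro c s s' hp
    have h1 : (s + a) % 2 = (s' + a) % 2 := by omega
    simp only [cCL, epsB_congr _ _ _ _ h1, ih _ _ _ h1]

lemma cCL_length (l : List ℕ) : ∀ c s, (cCL c s l).length = l.length := by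
  induction l with
  | nil => intros; rfl
  | cons a t ih => intro c s; simp [cCL, ih]

lemma cCL_sum (l : List ℕ) : ∀ c s, (∀ y ∈ l, 1 ≤ y) → c ≤ s % 2 → (s + l.sum) % 2 = 0 →
    (cCL c s l).sum = c + l.sum := by
  induction l with
  | nil => intro c s _ hc hs; simp [cCL] at hs ⊢; omega
  | cons a t ih =>
    intro c s hpos hc hs
    have ha : 1 ≤ a := hpos a (by simp)
    have he : epsB (s + a) a t.headI ≤ 1 := epsB_le_one _ _ _
    have he2 : epsB (s + a) a t.headI ≤ (s + a) % 2 := epsB_le_parity _ _ _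
    have := ih (epsB (s + a) a t.headI) (s + a) (fun y hy => hpos y (by simp [hy]))
      he2 (by simp at hs ⊢; omega)
    simp only [cCL, List.sum_cons, this]
    simp only [List.sum_cons] at hs
    omega

lemma epsL_le_one (l : List ℕ) : ∀ s k, epsL s l k ≤ 1 := by
  induction l with
  | nil => intro s k; simp [epsL]
  | cons a t ih =>
    intro s k
    match k with
    | 0 => simp [epsL]
    | 1 => exact epsB_le_one _ _ _
    | (k+2) => exact ih (s + a) (k + 1)

/-- Master prefix-sum lemma. -/
lemma cCL_take (k : ℕ) : ∀ (l : List ℕ) (c s : ℕ), (∀ y ∈ l, 1 ≤ y) → k + 1 ≤ l.length →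
    ((cCL c s l).take (k+1)).sum + epsL s l (k+1) = c + (l.take (k+1)).sum := by
  induction k with
  | zero =>
    intro l c s hpos hlen
    match l with
    | a :: t =>
      have ha : 1 ≤ a := hpos a (by simp)
      have he : epsB (s + a) a t.headI ≤ 1 := epsB_le_one _ _ _
      simp only [cCL, List.take_succ_cons, List.take_zero, List.sum_cons, List.sum_nil, epsL]
      omega
  | succ k ih =>
    intro l c s hpos hlen
    match l with
    | a :: t =>
      have ha : 1 ≤ a := hpos a (by simp)
      have he : epsB (s + a) a t.headI ≤ 1 := epsB_le_one _ _ _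
      have ht : k + 1 ≤ t.length := by simpa using hlen
      have := ih t (epsB (s + a) a t.headI) (s + a) (fun y hy => hpos y (by simp [hy])) ht
      simp only [cCL, List.take_succ_cons, List.sum_cons]
      show _ + epsL s (a :: t) (k+2) = _
      simp only [epsL]
      omega

lemma epsL_of_even (k : ℕ) : ∀ (l : List ℕ) (s : ℕ), (s + (l.take (k+1)).sum) % 2 = 0 →
    epsL s l (k+1) = 0 := by
  induction k with
  | zero =>
    intro l s h
    match l with
    | [] => rfl
    | a :: t =>
      simp only [List.take_succ_cons, List.take_zero, List.sum_cons, List.sum_nil] at h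
      show epsB (s + a) a t.headI = 0
      unfold epsB; split <;> omega
  | succ k ih =>
    intro l s h
    match l with
    | [] => rfl
    | a :: t =>
      show epsL (s + a) t (k+1) = 0
      apply ih
      simp only [List.take_succ_cons, List.sum_cons] at h
      omega

lemma epsL_of_pair (k : ℕ) : ∀ (l : List ℕ) (s x : ℕ) (t' : List ℕ),
    l.drop k = x :: x :: t' → x % 2 = 1 → epsL s l (k+1) = 0 := by
  induction k with
  | zero =>
    intro l s x t' hd hx
    simp only [List.drop_zero] at hd
    subst hd
    show epsB (s + x) x (List.headI (x :: t')) = 0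
    simp only [List.headI]
    unfold epsB
    split
    · next h => exact absurd ⟨rfl, hx⟩ h.2
    · rfl
  | succ k ih =>
    intro l s x t' hd hx
    match l with
    | [] => rfl
    | a :: t =>
      show epsL (s + a) t (k+1) = 0
      exact ih t (s + a) x t' (by simpa using hd) hx


lemma epsL_zero_odd (k : ℕ) : ∀ (l : List ℕ) (s : ℕ), (∀ y ∈ l, 1 ≤ y) →
    (s + (l.take (k+1)).sum) % 2 = 1 → epsL s l (k+1) = 0 → k + 1 ≤ l.length →
    ∃ x t', l.drop k = x :: x :: t' ∧ x % 2 = 1 := by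
  induction k with
  | zero =>
    intro l s hpos hodd hz hlen
    match l with
    | a :: t =>
      simp only [List.take_succ_cons, List.take_zero, List.sum_cons, List.sum_nil] at hodd
      have hz' : epsB (s + a) a t.headI = 0 := hz
      unfold epsB at hz'
      split at hz'
      · exact absurd hz' one_ne_zero
      · next h =>
        have hpair : a = t.headI ∧ a % 2 = 1 :=
          not_not.mp (fun hnp => h ⟨by omega, hnp⟩)
        match t with
        | [] =>
          exact absurd hpair.1 (by have := hpos a (by simp); simp [List.headI]; omega)
        | b :: t' =>
          refine ⟨a, t', ?_, hpair.2⟩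
          simp only [List.headI] at hpair
          simp [hpair.1]
  | succ k ih =>
    intro l s hpos hodd hz hlen
    match l with
    | a :: t =>
      have := ih t (s + a) (fun y hy => hpos y (by simp [hy]))
        (by simp only [List.take_succ_cons, List.sum_cons] at hodd; omega) hz
        (by simpa using hlen)
      simpa using this


lemma epsB_cur_even (S a h : ℕ) (hS : S % 2 = 1) (ha : a % 2 = 0) : epsB S a h = 1 := by
  unfold epsB
  rw [if_pos]
  exact ⟨hS, fun hp => by omega⟩

lemma epsB_eq_one (S a h : ℕ) (hB : epsB S a h = 1) :
    S % 2 = 1 ∧ ¬(a = h ∧ a % 2 = 1) := by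
  unfold epsB at hB
  split at hB
  · assumption
  · exact absurd hB zero_ne_one

lemma cCL_sorted (l : List ℕ) : ∀ c s, List.Chain' (· ≥ ·) l →
    (s % 2 = 1 → l.headI % 2 = 0 → c = 1) → List.Chain' (· ≥ ·) (cCL c s l) := by
  induction l with
  | nil => intros; exact List.isChain_nil
  | cons a t ih =>
    intro c s hchain hinv
    have hnext : List.Chain' (· ≥ ·) (cCL (epsB (s+a) a t.headI) (s+a) t) :=
      ih _ _ (List.isChain_cons.mp hchain).2 (fun h1 h2 => epsB_inv _ _ _ h1 h2)
    show List.Chain' _ ((a + c - epsB (s+a) a t.headI) :: cCL (epsB (s+a) a t.headI) (s+a) t)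
    unfold List.Chain'
    rw [List.isChain_cons]
    refine ⟨?_, hnext⟩
    rcases t with _ | ⟨b, t'⟩
    · intro y hy; simp [cCL] at hy
    · intro y hy
      simp only [cCL, List.head?_cons, Option.mem_def, Option.some.injEq] at hy
      rw [← hy]
      clear hy hnext
      simp only [List.headI_cons] at *
      have hab : b ≤ a := (List.isChain_cons_cons.mp hchain).1
      have he1 : epsB (s + a) a b ≤ 1 := epsB_le_one _ _ _
      have he'1 : epsB (s + a + b) b t'.headI ≤ 1 := epsB_le_one _ _ _
      rcases Nat.eq_zero_or_pos (epsB (s + a) a b) with h0 | h1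
      · omega
      · have he : epsB (s + a) a b = 1 := by omega
        obtain ⟨hS, hnp⟩ := epsB_eq_one _ _ _ he
        rcases Nat.lt_or_ge b (a - 1) with hlt | hge
        · omega
        · rcases Nat.eq_or_lt_of_le hab with heq | hlt2
          · -- a = b
            have hae : a % 2 = 0 := by
              by_contra hodd
              exact hnp ⟨heq.symm, by omega⟩
            have hc : c = 1 := hinv (by omega) hae
            have : epsB (s + a + b) b t'.headI = 1 :=
              epsB_cur_even _ _ _ (by omega) (by omega)
            omega
          · have hab1 : a = b + 1 := by omega
            rcases Nat.even_or_odd a with hae | hao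
            · have hae' : a % 2 = 0 := Nat.even_iff.mp hae
              have hc : c = 1 := hinv (by omega) hae'
              omega
            · have hao' : a % 2 = 1 := Nat.odd_iff.mp hao
              have : epsB (s + a + b) b t'.headI = 1 :=
                epsB_cur_even _ _ _ (by omega) (by omega)
              omega

lemma cCL_pos (l : List ℕ) : ∀ c s, (∀ y ∈ l, 1 ≤ y) → List.Chain' (· ≥ ·) l →
    (s + l.sum) % 2 = 0 → ∀ y ∈ cCL c s l, 1 ≤ y := by
  induction l with
  | nil => intro c s _ _ _ y hy; simp [cCL] at hy
  | cons a t ih =>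
    intro c s hpos hchain htot y hy
    simp only [cCL, List.mem_cons] at hy
    rcases hy with rfl | hy
    · have he1 : epsB (s + a) a t.headI ≤ 1 := epsB_le_one _ _ _
      have ha : 1 ≤ a := hpos a (by simp)
      rcases Nat.eq_zero_or_pos (epsB (s + a) a t.headI) with h0 | hep
      · omega
      · have he : epsB (s + a) a t.headI = 1 := by omega
        obtain ⟨hS, hnp⟩ := epsB_eq_one _ _ _ he
        rcases Nat.lt_or_ge a 2 with ha1 | ha2
        · exfalso
          have ha1' : a = 1 := by omega
          rcases t with _ | ⟨b, t'⟩
          · simp only [List.sum_cons, List.sum_nil] at htot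
            omega
          · have hb1 : 1 ≤ b := hpos b (by simp)
            have hba : b ≤ a := (List.isChain_cons_cons.mp hchain).1
            exact hnp ⟨by simp only [List.headI_cons]; omega, by omega⟩
        · omega
    · exact ih _ _ (fun z hz => hpos z (by simp [hz]))
        (List.isChain_cons.mp hchain).2
        (by simp only [List.sum_cons] at htot; omega) y hy


lemma countP_char (pb : ℕ → Bool) : ∀ (L : List ℕ) (k : ℕ), k ≤ L.length →
    (∀ (i : ℕ) (h : i < L.length), (pb L[i] = true ↔ i < k)) → L.countP pb = k := by
  intro L
  induction L with
  | nil =>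
    intro k hk _
    simp only [List.countP_nil]
    simp only [List.length_nil, Nat.le_zero] at hk
    omega
  | cons a t ih =>
    intro k hk hchar
    by_cases hpa : pb a = true
    · have h0 : 0 < k := (hchar 0 (by simp)).mp (by simpa using hpa)
      obtain ⟨k', rfl⟩ : ∃ k', k = k' + 1 := ⟨k - 1, by omega⟩
      have := ih k' (by simpa using hk) (fun i h => by
        have := hchar (i+1) (by simpa using h)
        simpa [Nat.succ_lt_succ_iff] using this)
      simp [List.countP_cons, hpa, this]
    · have h0 : k = 0 := by
        by_contra hne
        exact hpa ((hchar 0 (by simp)).mpr (by omega))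
      subst h0
      have := ih 0 (by omega) (fun i h => by
        have := hchar (i+1) (by simpa using h)
        simpa using this)
      simp [List.countP_cons, hpa, this]

lemma exists_cut (w : ℕ) : ∀ (L : List ℕ), L.Pairwise (· ≥ ·) →
    ∃ k, k ≤ L.length ∧ ∀ (i : ℕ) (h : i < L.length), (w ≤ L[i] ↔ i < k) := by
  intro L
  induction L with
  | nil => intro _; exact ⟨0, by simp⟩
  | cons a t ih =>
    intro hp
    have hpt := (List.pairwise_cons.mp hp).2
    have hat := (List.pairwise_cons.mp hp).1
    by_cases hwa : w ≤ a
    · obtain ⟨k, hk, hchar⟩ := ih hpt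
      refine ⟨k + 1, by simpa using hk, ?_⟩
      intro i h
      match i with
      | 0 => simpa using hwa
      | (i+1) =>
        have := hchar i (by simpa using h)
        simpa [Nat.succ_lt_succ_iff] using this
    · refine ⟨0, by omega, ?_⟩
      intro i h
      match i with
      | 0 => simpa using hwa
      | (i+1) =>
        have hlt : i < t.length := by simpa using h
        have hti : t[i]'hlt ≤ a := hat _ (List.getElem_mem hlt)
        simp only [List.getElem_cons_succ]
        exact ⟨fun hw => absurd (le_trans hw hti) hwa, by omega⟩

lemma countP_split (v : ℕ) (L : List ℕ) :
    L.countP (fun y => decide (v ≤ y)) =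
      L.countP (fun y => decide (v + 1 ≤ y)) + L.count v := by
  induction L with
  | nil => simp
  | cons a t ih =>
    simp only [List.countP_cons, List.count_cons, ih, beq_iff_eq, decide_eq_true_eq]
    split_ifs <;> omega

lemma count_take (L : List ℕ) (v m k₁ k₂ : ℕ)
    (hk₁ : k₁ ≤ L.length) (hchar₁ : ∀ (i : ℕ) (h : i < L.length), (v + 1 ≤ L[i] ↔ i < k₁))
    (hk₂ : k₂ ≤ L.length) (hchar₂ : ∀ (i : ℕ) (h : i < L.length), (v ≤ L[i] ↔ i < k₂)) :
    (L.take m).count v = min k₂ m - min k₁ m := by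
  have len : (L.take m).length = min m L.length := by simp [List.length_take]
  have c2 : (L.take m).countP (fun y => decide (v ≤ y)) = min k₂ m := by
    apply countP_char
    · omega
    · intro i h
      rw [len] at h
      have hi : i < L.length := by omega
      rw [List.getElem_take]
      simp only [decide_eq_true_eq]
      have := hchar₂ i hi
      constructor
      · intro hv; have := this.mp hv; omega
      · intro hv; exact this.mpr (by omega)
  have c1 : (L.take m).countP (fun y => decide (v + 1 ≤ y)) = min k₁ m := by
    apply countP_char
    · omega
    · intro i h
      rw [len] at h
      have hi : i < L.length := by omega
      rw [List.getElem_take]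
      simp only [decide_eq_true_eq]
      have := hchar₁ i hi
      constructor
      · intro hv; have := this.mp hv; omega
      · intro hv; exact this.mpr (by omega)
  have := countP_split v (L.take m)
  omega

lemma sum_take_seg (L : List ℕ) (v k₁ k₂ : ℕ) (h12 : k₁ ≤ k₂) (hk₂ : k₂ ≤ L.length)
    (hmid : ∀ (i : ℕ) (h : i < L.length), k₁ ≤ i → i < k₂ → L[i] = v) :
    (L.take k₂).sum = (L.take k₁).sum + (k₂ - k₁) * v := by
  have hsplit : L.take k₂ = L.take k₁ ++ (L.drop k₁).take (k₂ - k₁) := by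
    rw [← List.take_add]
    congr 1
    omega
  rw [hsplit, List.sum_append]
  congr 1
  have hrep : (L.drop k₁).take (k₂ - k₁) = List.replicate (k₂ - k₁) v := by
    rw [List.eq_replicate_iff]
    constructor
    · rw [List.length_take, List.length_drop]; omega
    · intro b hb
      obtain ⟨i, hi, rfl⟩ := List.mem_iff_getElem.mp hb
      rw [List.getElem_take, List.getElem_drop]
      have hlen : i < (L.drop k₁).length := by
        have := (List.length_take : ((L.drop k₁).take (k₂ - k₁)).length = _)
        omega
      rw [List.length_drop] at hlen
      apply hmid <;> try omega
      have := (List.length_take : ((L.drop k₁).take (k₂ - k₁)).length = _)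
      rw [List.length_drop] at this
      omega
  rw [hrep, List.sum_replicate, smul_eq_mul]

lemma sum_mod_two (L : List ℕ) :
    L.sum % 2 = L.countP (fun y => decide (y % 2 = 1)) % 2 := by
  induction L with
  | nil => simp
  | cons a t ih =>
    simp only [List.sum_cons, List.countP_cons, decide_eq_true_eq]
    split_ifs with h <;> omega

lemma countP_odd_even (L : List ℕ) (h : ∀ v, v % 2 = 1 → L.count v % 2 = 0) :
    L.countP (fun y => decide (y % 2 = 1)) % 2 = 0 := by
  have e1 : L.countP (fun y => decide (y % 2 = 1)) =
      Multiset.countP (fun y => y % 2 = 1) (↑L : Multiset ℕ) := by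
    rw [Multiset.coe_countP]
  rw [e1, Multiset.countP_eq_card_filter, ← Multiset.toFinset_sum_count_eq,
    Finset.sum_nat_mod]
  have : ∀ a ∈ (Multiset.filter (fun y => y % 2 = 1) (↑L : Multiset ℕ)).toFinset,
      Multiset.count a (Multiset.filter (fun y => y % 2 = 1) (↑L : Multiset ℕ)) % 2 = 0 := by
    intro a _
    rw [Multiset.count_filter]
    split
    · next ha => rw [Multiset.coe_count]; exact h a ha
    · simp
  rw [Finset.sum_congr rfl this]
  simp


lemma take_sum_le (L : List ℕ) (k : ℕ) : (L.take k).sum ≤ L.sum := by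
  conv_rhs => rw [← List.take_append_drop k L]
  rw [List.sum_append]
  omega

lemma epsL_zero (s : ℕ) (l : List ℕ) : epsL s l 0 = 0 := by
  cases l <;> rfl

lemma cut_mono {v : ℕ} {L : List ℕ} {k₁ k₂ : ℕ}
    (hk₁ : k₁ ≤ L.length) (hchar₁ : ∀ (i : ℕ) (h : i < L.length), (v + 1 ≤ L[i] ↔ i < k₁))
    (hk₂ : k₂ ≤ L.length) (hchar₂ : ∀ (i : ℕ) (h : i < L.length), (v ≤ L[i] ↔ i < k₂)) :
    k₁ ≤ k₂ := by
  by_contra hc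
  push_neg at hc
  have hi : k₂ < L.length := by omega
  have h1 := (hchar₁ k₂ hi).mpr (by omega)
  have h2 := (hchar₂ k₂ hi).mp (by omega)
  omega

lemma count_full (L : List ℕ) (v k₁ k₂ : ℕ)
    (hk₁ : k₁ ≤ L.length) (hchar₁ : ∀ (i : ℕ) (h : i < L.length), (v + 1 ≤ L[i] ↔ i < k₁))
    (hk₂ : k₂ ≤ L.length) (hchar₂ : ∀ (i : ℕ) (h : i < L.length), (v ≤ L[i] ↔ i < k₂)) :
    L.count v = k₂ - k₁ := by
  have := count_take L v L.length k₁ k₂ hk₁ hchar₁ hk₂ hchar₂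
  rw [List.take_length] at this
  rw [this]
  omega

lemma straddle (rl : List ℕ) (hpos : ∀ y ∈ rl, 1 ≤ y) (hsort : rl.Pairwise (· ≥ ·))
    (hcnt : ∀ v, v % 2 = 1 → rl.count v % 2 = 0) (k : ℕ) (hk : k + 1 ≤ rl.length)
    (hodd : (rl.take (k+1)).sum % 2 = 1) :
    ∃ x t', rl.drop k = x :: x :: t' ∧ x % 2 = 1 := by
  have h1 : (rl.take (k+1)).countP (fun y => decide (y % 2 = 1)) % 2 = 1 := by
    have := sum_mod_two (rl.take (k+1))
    omega
  have hex : ∃ v, v % 2 = 1 ∧ ¬ ((rl.take (k+1)).count v % 2 = 0) := by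
    by_contra hno
    push_neg at hno
    have := countP_odd_even (rl.take (k+1)) hno
    omega
  obtain ⟨v, hv, hvc⟩ := hex
  obtain ⟨k₂, hk₂, hchar₂⟩ := exists_cut v rl hsort
  obtain ⟨k₁, hk₁, hchar₁⟩ := exists_cut (v+1) rl hsort
  have h12 : k₁ ≤ k₂ := cut_mono hk₁ hchar₁ hk₂ hchar₂
  have hctake := count_take rl v (k+1) k₁ k₂ hk₁ hchar₁ hk₂ hchar₂
  have hcfull := count_full rl v k₁ k₂ hk₁ hchar₁ hk₂ hchar₂
  have heven := hcnt v hv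
  have hlt : k₁ < k + 1 ∧ k + 1 < k₂ := by omega
  have hklen : k < rl.length := by omega
  have hk1len : k + 1 < rl.length := by omega
  have hvk : rl[k] = v := by
    have ha := (hchar₂ k hklen).mpr (by omega)
    have hb := (hchar₁ k hklen)
    have : ¬ (v + 1 ≤ rl[k]) := fun hc => by have := hb.mp hc; omega
    omega
  have hvk1 : rl[k+1] = v := by
    have ha := (hchar₂ (k+1) hk1len).mpr (by omega)
    have hb := (hchar₁ (k+1) hk1len)
    have : ¬ (v + 1 ≤ rl[k+1]) := fun hc => by have := hb.mp hc; omega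
    omega
  refine ⟨v, rl.drop (k+2), ?_, hv⟩
  rw [List.drop_eq_getElem_cons hklen, List.drop_eq_getElem_cons hk1len, hvk, hvk1]

lemma out_take (l : List ℕ) (hpos : ∀ y ∈ l, 1 ≤ y) (heven : l.sum % 2 = 0) (k : ℕ) :
    ((cCL 0 0 l).take k).sum + epsL 0 l k = (l.take k).sum := by
  match k with
  | 0 => simp [epsL_zero]
  | (j+1) =>
    rcases Nat.lt_or_ge (j+1) (l.length + 1) with h | h
    · have := cCL_take j l 0 0 hpos (by omega)
      simpa using this
    · have hlen : l.length ≤ j + 1 := by omega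
      have h1 : (cCL 0 0 l).take (j+1) = cCL 0 0 l :=
        List.take_of_length_le (by rw [cCL_length]; omega)
      have h2 : l.take (j+1) = l := List.take_of_length_le hlen
      have h3 : epsL 0 l (j+1) = 0 := by
        apply epsL_of_even
        rw [h2]
        omega
      rw [h1, h2, h3, cCL_sum l 0 0 hpos (by omega) (by omega)]
      omega

lemma out_PS (l : List ℕ) (hpos : ∀ y ∈ l, 1 ≤ y) (hsort : l.Pairwise (· ≥ ·))
    (heven : l.sum % 2 = 0) (k : ℕ)
    (hodd : ((cCL 0 0 l).take (k+1)).sum % 2 = 1) :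
    ∃ x t', (cCL 0 0 l).drop k = x :: x :: t' ∧ x % 2 = 1 := by
  have hlen : k + 1 ≤ l.length := by
    by_contra hc
    push_neg at hc
    have h1 : (cCL 0 0 l).take (k+1) = cCL 0 0 l :=
      List.take_of_length_le (by rw [cCL_length]; omega)
    rw [h1, cCL_sum l 0 0 hpos (by omega) (by omega)] at hodd
    omega
  have hT := out_take l hpos heven (k+1)
  have hε1 := epsL_le_one l 0 (k+1)
  have hSodd : (l.take (k+1)).sum % 2 = 1 := by
    by_contra hc
    have := epsL_of_even k l 0 (by omega)
    omega
  have hε0 : epsL 0 l (k+1) = 0 := by omega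
  obtain ⟨x, t', hdrop, hx⟩ := epsL_zero_odd k l 0 hpos (by omega) hε0 hlen
  have hklen : k < l.length := by omega
  have hdroplen : k + 2 ≤ l.length := by
    have := congrArg List.length hdrop
    simp [List.length_drop] at this
    omega
  have hk1len : k + 1 < l.length := by omega
  have hlk : l[k] = x ∧ l[k+1] = x := by
    rw [List.drop_eq_getElem_cons hklen, List.drop_eq_getElem_cons hk1len] at hdrop
    exact ⟨(List.cons.injEq _ _ _ _).mp hdrop |>.1,
      ((List.cons.injEq _ _ _ _).mp ((List.cons.injEq _ _ _ _).mp hdrop).2).1⟩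
  have hSk : (l.take (k+1)).sum = (l.take k).sum + x := by
    rw [List.sum_take_succ l k hklen, hlk.1]
  have hSk2 : (l.take (k+2)).sum = (l.take (k+1)).sum + x := by
    rw [List.sum_take_succ l (k+1) hk1len, hlk.2]
  have hTk : ((cCL 0 0 l).take k).sum = (l.take k).sum := by
    match k with
    | 0 => simp
    | (j+1) =>
      have h1 := out_take l hpos heven (j+1)
      have h2 : epsL 0 l (j+1) = 0 := epsL_of_even j l 0 (by omega)
      omega
  have hTk2 : ((cCL 0 0 l).take (k+2)).sum = (l.take (k+2)).sum := by
    have h1 := out_take l hpos heven (k+2)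
    have h2 : epsL 0 l (k+2) = 0 := epsL_of_even (k+1) l 0 (by
      show (0 + (l.take (k+2)).sum) % 2 = 0
      omega)
    rw [show k+1+1 = k+2 from rfl] at h1
    omega
  have houtlen : k < (cCL 0 0 l).length := by rw [cCL_length]; omega
  have houtlen1 : k + 1 < (cCL 0 0 l).length := by rw [cCL_length]; omega
  have hout_k : (cCL 0 0 l)[k] = x := by
    have := List.sum_take_succ (cCL 0 0 l) k houtlen
    omega
  have hout_k1 : (cCL 0 0 l)[k+1] = x := by
    have := List.sum_take_succ (cCL 0 0 l) (k+1) houtlen1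
    rw [show k+1+1 = k+2 from rfl] at this
    omega
  refine ⟨x, (cCL 0 0 l).drop (k+2), ?_, hx⟩
  rw [List.drop_eq_getElem_cons houtlen, List.drop_eq_getElem_cons houtlen1, hout_k, hout_k1]


lemma out_sorted (l : List ℕ) (hsort : l.Pairwise (· ≥ ·)) :
    (cCL 0 0 l).Pairwise (· ≥ ·) := by
  rw [← List.isChain_iff_pairwise]
  exact cCL_sorted l 0 0 (List.isChain_iff_pairwise.mpr hsort) (fun h _ => by omega)

lemma out_pos (l : List ℕ) (hpos : ∀ y ∈ l, 1 ≤ y) (hsort : l.Pairwise (· ≥ ·))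
    (heven : l.sum % 2 = 0) : ∀ y ∈ cCL 0 0 l, 1 ≤ y :=
  cCL_pos l 0 0 hpos (List.isChain_iff_pairwise.mpr hsort) (by omega)

lemma pair_of_drop {L : List ℕ} {j : ℕ} {x : ℕ} {t' : List ℕ}
    (hdrop : L.drop j = x :: x :: t') :
    j + 2 ≤ L.length ∧ ∃ (h1 : j < L.length) (h2 : j + 1 < L.length),
      L[j] = x ∧ L[j+1] = x := by
  have hlen : j + 2 ≤ L.length := by
    have := congrArg List.length hdrop
    simp [List.length_drop] at this
    omega
  have h1 : j < L.length := by omega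
  have h2 : j + 1 < L.length := by omega
  rw [List.drop_eq_getElem_cons h1, List.drop_eq_getElem_cons h2] at hdrop
  refine ⟨hlen, h1, h2, ?_, ?_⟩
  · exact ((List.cons.injEq _ _ _ _).mp hdrop).1
  · exact (((List.cons.injEq _ _ _ _).mp ((List.cons.injEq _ _ _ _).mp hdrop).2)).1

lemma out_typeC (l : List ℕ) (hpos : ∀ y ∈ l, 1 ≤ y) (hsort : l.Pairwise (· ≥ ·))
    (heven : l.sum % 2 = 0) : ∀ v, v % 2 = 1 → (cCL 0 0 l).count v % 2 = 0 := by
  intro v hv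
  have osort : (cCL 0 0 l).Pairwise (· ≥ ·) := out_sorted l hsort
  obtain ⟨k₂, hk₂, hchar₂⟩ := exists_cut v (cCL 0 0 l) osort
  obtain ⟨k₁, hk₁, hchar₁⟩ := exists_cut (v+1) (cCL 0 0 l) osort
  have h12 : k₁ ≤ k₂ := cut_mono hk₁ hchar₁ hk₂ hchar₂
  have hcnt : (cCL 0 0 l).count v = k₂ - k₁ := count_full _ v k₁ k₂ hk₁ hchar₁ hk₂ hchar₂
  have hTk₁ : ((cCL 0 0 l).take k₁).sum % 2 = 0 := by
    rcases Nat.eq_zero_or_pos k₁ with h0 | hp1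
    · simp [h0]
    · by_contra hoddt
      obtain ⟨j, rfl⟩ : ∃ j, k₁ = j + 1 := ⟨k₁ - 1, by omega⟩
      obtain ⟨x, t', hdrop, hx⟩ := out_PS l hpos hsort heven j (by omega)
      obtain ⟨hlen2, hj1, hj2, hxj, hxj1⟩ := pair_of_drop hdrop
      have ha := (hchar₁ j hj1).mpr (by omega)
      have hb := (hchar₁ (j+1) hj2)
      have hc : v + 1 ≤ (cCL 0 0 l)[j+1] := by rw [hxj1, ← hxj]; exact ha
      have := hb.mp hc
      omega
  have hTk₂ : ((cCL 0 0 l).take k₂).sum % 2 = 0 := by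
    rcases Nat.eq_zero_or_pos k₂ with h0 | hp2
    · simp [h0]
    · by_contra hoddt
      obtain ⟨j, rfl⟩ : ∃ j, k₂ = j + 1 := ⟨k₂ - 1, by omega⟩
      obtain ⟨x, t', hdrop, hx⟩ := out_PS l hpos hsort heven j (by omega)
      obtain ⟨hlen2, hj1, hj2, hxj, hxj1⟩ := pair_of_drop hdrop
      have ha := (hchar₂ j hj1).mpr (by omega)
      have hb := (hchar₂ (j+1) hj2)
      have hc : v ≤ (cCL 0 0 l)[j+1] := by rw [hxj1, ← hxj]; exact ha
      have := hb.mp hc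
      omega
  have hseg : ((cCL 0 0 l).take k₂).sum = ((cCL 0 0 l).take k₁).sum + (k₂ - k₁) * v := by
    apply sum_take_seg _ v k₁ k₂ h12 hk₂
    intro i h hi1 hi2
    have ha := (hchar₂ i h).mpr hi2
    have hb : ¬ (v + 1 ≤ (cCL 0 0 l)[i]) := fun hc => by have := (hchar₁ i h).mp hc; omega
    omega
  have hprod : ((k₂ - k₁) * v) % 2 = 0 := by omega
  have hm := Nat.mul_mod (k₂ - k₁) v 2
  rw [hv, mul_one] at hm
  omega

lemma cCL_max (l rl : List ℕ) (hpos : ∀ y ∈ l, 1 ≤ y) (hsort : l.Pairwise (· ≥ ·))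
    (heven : l.sum % 2 = 0)
    (rpos : ∀ y ∈ rl, 1 ≤ y) (rsort : rl.Pairwise (· ≥ ·))
    (rcnt : ∀ v, v % 2 = 1 → rl.count v % 2 = 0) (rsum : rl.sum = l.sum)
    (hdom : ∀ k, (rl.take k).sum ≤ (l.take k).sum) :
    ∀ k, (rl.take k).sum ≤ ((cCL 0 0 l).take k).sum := by
  intro k
  match k with
  | 0 => simp
  | (j+1) =>
    have hosum : (cCL 0 0 l).sum = l.sum := by
      have := cCL_sum l 0 0 hpos (by omega) (by omega)
      omega
    rcases Nat.lt_or_ge (j+1) (l.length+1) with hlen | hlen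
    · have hT := out_take l hpos heven (j+1)
      have hε1 := epsL_le_one l 0 (j+1)
      have hU := hdom (j+1)
      by_cases hUS : (rl.take (j+1)).sum = (l.take (j+1)).sum
      · by_cases hSe : (l.take (j+1)).sum % 2 = 0
        · have := epsL_of_even j l 0 (by omega)
          omega
        · -- S odd
          have hrlen : j + 1 ≤ rl.length := by
            by_contra hc
            push_neg at hc
            rw [List.take_of_length_le (by omega)] at hUS
            have := take_sum_le l (j+1)
            omega
          obtain ⟨v, t', hdrop, hvodd⟩ := straddle rl rpos rsort rcnt j hrlen (by omega)
          obtain ⟨hrlen2, hr1, hr2, hrv, hrv1⟩ := pair_of_drop hdrop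
          have hUsucc := List.sum_take_succ rl j hr1
          have hUsucc2 := List.sum_take_succ rl (j+1) hr2
          have hlj : j < l.length := by omega
          have hSsucc := List.sum_take_succ l j hlj
          have hdomj := hdom j
          have hlj1 : j + 1 < l.length := by
            by_contra hc
            push_neg at hc
            have hje : j + 1 = l.length := by omega
            have : l.take (j+1) = l := List.take_of_length_le (by omega)
            rw [this] at hSe
            omega
          have hdomj2 := hdom (j+2)
          have hSsucc2 := List.sum_take_succ l (j+1) hlj1
          have hls : l[j+1] ≤ l[j] :=
            List.pairwise_iff_getElem.mp hsort j (j+1) hlj hlj1 (by omega)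
          have hljv : l[j] = v ∧ l[j+1] = v := by
            rw [show j+1+1 = j+2 from rfl] at hUsucc2 hSsucc2
            omega
          have hdropl : l.drop j = v :: v :: l.drop (j+2) := by
            rw [List.drop_eq_getElem_cons hlj, List.drop_eq_getElem_cons hlj1,
              hljv.1, hljv.2]
          have := epsL_of_pair j l 0 v (l.drop (j+2)) hdropl hvodd
          omega
      · omega
    · have h1 : (cCL 0 0 l).take (j+1) = cCL 0 0 l :=
        List.take_of_length_le (by rw [cCL_length]; omega)
      rw [h1, hosum]
      have := take_sum_le rl (j+1)
      omega



lemma epsB_of_ne (S a h : ℕ) (hS : S % 2 = 1) (hne : a ≠ h) : epsB S a h = 1 := by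
  unfold epsB
  rw [if_pos ⟨hS, fun hp => hne hp.1⟩]

lemma cCL_append (l₂ : List ℕ) : ∀ (l₁ : List ℕ) (c s : ℕ), (∀ y ∈ l₁, 1 ≤ y) →
    c ≤ s % 2 → (s + l₁.sum) % 2 = 0 →
    cCL c s (l₁ ++ l₂) = cCL c s l₁ ++ cCL 0 (s + l₁.sum) l₂ := by
  intro l₁
  induction l₁ with
  | nil =>
    intro c s _ hc hev
    simp only [List.sum_nil] at hev
    have hc0 : c = 0 := by omega
    subst hc0
    simp [cCL]
  | cons a t ih =>
    intro c s hpos hc hev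
    simp only [List.sum_cons] at hev
    match t with
    | [] =>
      have he : (s + a) % 2 = 0 := by simp at hev; omega
      show (a + c - epsB (s + a) a l₂.headI) :: cCL (epsB (s + a) a l₂.headI) (s + a) l₂ = _
      rw [epsB_of_even _ _ _ he]
      show _ = ((a + c - epsB (s + a) a ([] : List ℕ).headI) ::
        cCL (epsB (s + a) a ([] : List ℕ).headI) (s + a) []) ++ cCL 0 (s + (a + List.sum [])) l₂
      rw [epsB_of_even _ _ _ he]
      show (a + c - 0) :: cCL 0 (s + a) l₂ = (a + c - 0) :: (cCL 0 (s + a) [] ++ cCL 0 (s + (a + 0)) l₂)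
      simp [cCL]
    | b :: t' =>
      show (a + c - epsB (s + a) a b) :: cCL (epsB (s + a) a b) (s + a) ((b :: t') ++ l₂) = _
      have hrec := ih (epsB (s + a) a b) (s + a)
        (fun y hy => hpos y (by simp [hy])) (epsB_le_parity _ _ _) (by omega)
      rw [hrec]
      show _ = ((a + c - epsB (s + a) a b) :: (cCL (epsB (s + a) a b) (s + a) (b :: t')))
        ++ cCL 0 (s + (a + (b :: t').sum)) l₂
      rw [List.cons_append, ← add_assoc]

def decLast : List ℕ → List ℕ
  | [] => []
  | [a] => [a - 1]
  | a :: b :: t => a :: decLast (b :: t)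

lemma decLast_perm : ∀ (l : List ℕ) (h : l ≠ []), List.Perm (decLast l) ((l.getLast h - 1) :: l.dropLast) := by
  intro l
  induction l with
  | nil => intro h; exact absurd rfl h
  | cons a t ih =>
    intro _
    match t with
    | [] => exact List.Perm.refl _
    | b :: t' =>
      show List.Perm (a :: decLast (b :: t')) _
      have h1 : List.Perm (a :: decLast (b :: t'))
          (a :: (((b :: t').getLast (by simp) - 1) :: (b :: t').dropLast)) :=
        List.Perm.cons a (ih (by simp))
      refine h1.trans ?_
      have h2 : (a :: b :: t').getLast (by simp) = (b :: t').getLast (by simp) := by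
        rw [List.getLast_cons]
      rw [h2]
      have h3 : (a :: b :: t').dropLast = a :: (b :: t').dropLast := rfl
      rw [h3]
      exact List.Perm.swap _ _ _

lemma decLast_pairwise : ∀ (l : List ℕ), l.Pairwise (· ≥ ·) → (decLast l).Pairwise (· ≥ ·) := by
  intro l
  induction l with
  | nil => intro _; exact List.Pairwise.nil
  | cons a t ih =>
    intro hp
    match t with
    | [] => exact List.pairwise_singleton _ _
    | b :: t' =>
      show ((a :: decLast (b :: t')).Pairwise (· ≥ ·))
      rw [List.pairwise_cons]
      have hpt := (List.pairwise_cons.mp hp).2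
      have hat := (List.pairwise_cons.mp hp).1
      refine ⟨?_, ih hpt⟩
      intro y hy
      have hy' : y ∈ ((b :: t').getLast (by simp) - 1) :: (b :: t').dropLast :=
        (decLast_perm (b :: t') (by simp)).mem_iff.mp hy
      rcases List.mem_cons.mp hy' with rfl | hy2
      · have := hat _ (List.getLast_mem (l := b :: t') (by simp))
        omega
      · exact hat _ ((List.dropLast_sublist (b :: t')).subset hy2)

lemma decLast_pos : ∀ (l : List ℕ) (h : l ≠ []), (∀ y ∈ l, 1 ≤ y) →
    2 ≤ l.getLast h → ∀ y ∈ decLast l, 1 ≤ y := by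
  intro l h hpos h2 y hy
  have hy' : y ∈ (l.getLast h - 1) :: l.dropLast := (decLast_perm l h).mem_iff.mp hy
  rcases List.mem_cons.mp hy' with rfl | hy2
  · omega
  · exact hpos y ((List.dropLast_sublist l).subset hy2)

lemma decLast_sum (l : List ℕ) (h : l ≠ []) (h1 : 1 ≤ l.getLast h) :
    (decLast l).sum = l.sum - 1 := by
  have hp := (decLast_perm l h).sum_eq
  have hl : l.sum = l.dropLast.sum + l.getLast h := by
    conv_lhs => rw [← List.dropLast_append_getLast h]
    rw [List.sum_append]
    simp
  rw [hp, List.sum_cons]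
  omega

lemma headI_le {b : ℕ} {r : List ℕ} (hp : (b :: r).Pairwise (· ≥ ·)) : r.headI ≤ b := by
  match r with
  | [] => simp [List.headI]
  | c :: r' => exact (List.pairwise_cons.mp hp).1 c (by simp)

lemma cCL_split_odd : ∀ (l₁ : List ℕ), l₁ ≠ [] → ∀ (c s : ℕ) (l₂ : List ℕ),
    l₁.Pairwise (· ≥ ·) → (∀ y ∈ l₁, l₂.headI < y) → (s + l₁.sum) % 2 = 1 → c ≤ s % 2 →
    cCL c s (l₁ ++ l₂) = cCL c s (decLast l₁) ++ cCL 1 (s + l₁.sum) l₂ := by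
  intro l₁
  induction l₁ with
  | nil => intro h; exact absurd rfl h
  | cons a t ih =>
    intro _ c s l₂ hsort hgt hodd hc
    have ha1 : 1 ≤ a := by have := hgt a (by simp); omega
    match t with
    | [] =>
      simp only [List.sum_cons, List.sum_nil] at hodd ⊢
      have he : epsB (s + a) a l₂.headI = 1 :=
        epsB_of_ne _ _ _ (by omega) (by have := hgt a (by simp); omega)
      show (a + c - epsB (s + a) a l₂.headI) :: cCL (epsB (s + a) a l₂.headI) (s + a) l₂ = _
      rw [he]
      show _ = ((a - 1 + c - epsB (s + (a-1)) (a-1) ([] : List ℕ).headI) ::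
        cCL (epsB (s + (a-1)) (a-1) ([] : List ℕ).headI) (s + (a-1)) []) ++ cCL 1 (s + (a + 0)) l₂
      rw [epsB_of_even _ _ _ (by omega)]
      show (a + c - 1) :: cCL 1 (s + a) l₂ = (a - 1 + c - 0) :: (cCL 0 (s + (a-1)) [] ++ cCL 1 (s + (a + 0)) l₂)
      have h9 : a + c - 1 = a - 1 + c - 0 := by omega
      rw [h9]
      congr 1
    | b :: t' =>
      have hbtne : (b :: t') ≠ [] := by simp
      have he : epsB (s + a) a ((b :: t').headI) = epsB (s + a) a ((decLast (b :: t')).headI) := by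
        match t' with
        | [] =>
          show epsB (s + a) a b = epsB (s + a) a (b - 1)
          have hab : b ≤ a := (List.pairwise_cons.mp hsort).1 b (by simp)
          have hb1 : 1 ≤ b := by have := hgt b (by simp); omega
          rcases Nat.even_or_odd (s + a) with hev | hod
          · rw [epsB_of_even _ _ _ (Nat.even_iff.mp hev), epsB_of_even _ _ _ (Nat.even_iff.mp hev)]
          · have hod' : (s + a) % 2 = 1 := Nat.odd_iff.mp hod
            by_cases hab2 : a = b
            · -- if a = b odd: contradiction with parity; else a even: both epsB = 1
              rcases Nat.even_or_odd a with hae | hao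
              · rw [epsB_cur_even _ _ _ hod' (Nat.even_iff.mp hae),
                  epsB_cur_even _ _ _ hod' (Nat.even_iff.mp hae)]
              · exfalso
                simp only [List.sum_cons, List.sum_nil] at hodd
                have h1 := Nat.odd_iff.mp hao
                omega
            · rw [epsB_of_ne _ _ _ hod' hab2, epsB_of_ne _ _ _ hod' (by omega)]
        | c' :: t'' => rfl
      show (a + c - epsB (s + a) a ((b :: t').headI)) ::
          cCL (epsB (s + a) a ((b :: t').headI)) (s + a) ((b :: t') ++ l₂) = _
      have hrec := ih hbtne (epsB (s + a) a ((b :: t').headI)) (s + a) l₂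
        (List.pairwise_cons.mp hsort).2
        (fun y hy => hgt y (by simp [hy]))
        (by simp only [List.sum_cons] at hodd ⊢; omega)
        (epsB_le_parity _ _ _)
      rw [hrec]
      show _ = ((a + c - epsB (s + a) a ((decLast (b :: t')).headI)) ::
          cCL (epsB (s + a) a ((decLast (b :: t')).headI)) (s + a) (decLast (b :: t')))
        ++ cCL 1 (s + (a + (b :: t').sum)) l₂
      rw [List.cons_append, ← he, ← add_assoc]

lemma epsB_of_notpair (S a h : ℕ) (hS : S % 2 = 1) (hnp : ¬(a = h ∧ a % 2 = 1)) :
    epsB S a h = 1 := by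
  unfold epsB
  rw [if_pos ⟨hS, hnp⟩]

lemma cCL_plus (b s : ℕ) (r : List ℕ) (hs : s % 2 = 1) (hr : r.headI ≤ b) :
    cCL 1 s (b :: r) = cCL 0 0 ((b + 1) :: r) := by
  show (b + 1 - epsB (s + b) b r.headI) :: cCL (epsB (s + b) b r.headI) (s + b) r =
    (b + 1 + 0 - epsB (0 + (b+1)) (b+1) r.headI) :: cCL (epsB (0 + (b+1)) (b+1) r.headI) (0 + (b+1)) r
  have he : epsB (s + b) b r.headI = epsB (0 + (b+1)) (b+1) r.headI := by
    rcases Nat.even_or_odd (s + b) with hev | hod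
    · have hev' : (s + b) % 2 = 0 := Nat.even_iff.mp hev
      rw [epsB_of_even _ _ _ hev', epsB_of_even _ _ _ (by omega)]
    · have hod' : (s + b) % 2 = 1 := Nat.odd_iff.mp hod
      have hnp : ¬(b = r.headI ∧ b % 2 = 1) := fun hp => by
        have := hp.2
        omega
      rw [epsB_of_notpair _ _ _ hod' hnp, epsB_of_ne _ _ _ (by omega) (by omega)]
  rw [he, cCL_parity r (epsB (0 + (b+1)) (b+1) r.headI) (s + b) (0 + (b+1)) (by omega)]

lemma sortedD_pairwise (p : Multiset ℕ) : (sortedD p).Pairwise (· ≥ ·) := by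
  unfold sortedD
  rw [List.pairwise_reverse]
  exact Multiset.pairwise_sort (s := p) (r := (· ≤ ·))

lemma coe_sortedD (p : Multiset ℕ) : (↑(sortedD p) : Multiset ℕ) = p := by
  unfold sortedD
  rw [Multiset.coe_reverse, Multiset.sort_eq]

lemma sortedD_coe (l : List ℕ) (h : l.Pairwise (· ≥ ·)) : sortedD (↑l) = l := by
  unfold sortedD
  have h1 : (↑l : Multiset ℕ).sort (· ≤ ·) = l.reverse := by
    refine (fun hp h1 h2 => List.Perm.eq_of_pairwise' (r := fun a b : ℕ => a ≤ b) h1 h2 hp) ?_ ?_ ?_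
    · apply Multiset.coe_eq_coe.mp
      rw [Multiset.sort_eq, Multiset.coe_reverse]
    · exact Multiset.pairwise_sort (s := (↑l : Multiset ℕ)) (r := (· ≤ ·))
    · show List.Pairwise _ _
      rw [List.pairwise_reverse]
      exact h
  rw [h1, List.reverse_reverse]

lemma sortedD_sum (p : Multiset ℕ) : (sortedD p).sum = p.sum := by
  conv_rhs => rw [← coe_sortedD p]
  rw [Multiset.sum_coe]

lemma sortedD_pos (p : Multiset ℕ) (h : ∀ y ∈ p, 0 < y) : ∀ y ∈ sortedD p, 1 ≤ y :=
  fun y hy => h y (by rw [← coe_sortedD p]; exact Multiset.mem_coe.mpr hy)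

lemma eq_of_take_sums : ∀ (l₁ l₂ : List ℕ), (∀ y ∈ l₁, 1 ≤ y) → (∀ y ∈ l₂, 1 ≤ y) →
    (∀ k, (l₁.take k).sum = (l₂.take k).sum) → l₁ = l₂ := by
  intro l₁
  induction l₁ with
  | nil =>
    intro l₂ _ h2 hk
    match l₂ with
    | [] => rfl
    | b :: t₂ =>
      have := hk 1
      simp at this
      have := h2 b (by simp)
      omega
  | cons a t ih =>
    intro l₂ h1 h2 hk
    match l₂ with
    | [] =>
      have := hk 1
      simp at this
      have := h1 a (by simp)
      omega
    | b :: t₂ =>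
      have hab : a = b := by have := hk 1; simpa using this
      subst hab
      have := ih t₂ (fun y hy => h1 y (by simp [hy])) (fun y hy => h2 y (by simp [hy]))
        (fun k => by have := hk (k+1); simpa using this)
      rw [this]

lemma collapse_unique {X : PType} {p q₁ q₂ : Multiset ℕ}
    (h₁ : IsCollapse X p q₁) (h₂ : IsCollapse X p q₂) : q₁ = q₂ := by
  have d12 : Dom q₁ q₂ := h₁.2.2.2 q₂ h₂.1 h₂.2.1 h₂.2.2.1
  have d21 : Dom q₂ q₁ := h₂.2.2.2 q₁ h₁.1 h₁.2.1 h₁.2.2.1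
  have hsq : sortedD q₁ = sortedD q₂ := by
    apply eq_of_take_sums
    · exact sortedD_pos q₁ h₁.1.1
    · exact sortedD_pos q₂ h₂.1.1
    · exact fun k => le_antisymm (d21 k) (d12 k)
  calc q₁ = ↑(sortedD q₁) := (coe_sortedD q₁).symm
    _ = ↑(sortedD q₂) := by rw [hsq]
    _ = q₂ := coe_sortedD q₂

lemma isCollapse_out (p : Multiset ℕ) (hpos : ∀ y ∈ p, 0 < y) (heven : p.sum % 2 = 0) :
    IsCollapse .C p ↑(cCL 0 0 (sortedD p)) := by
  have lpos : ∀ y ∈ sortedD p, 1 ≤ y := sortedD_pos p hpos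
  have lsort : (sortedD p).Pairwise (· ≥ ·) := sortedD_pairwise p
  have lsum : (sortedD p).sum = p.sum := sortedD_sum p
  have leven : (sortedD p).sum % 2 = 0 := by omega
  have opos := out_pos (sortedD p) lpos lsort leven
  have osort := out_sorted (sortedD p) lsort
  have osum : (cCL 0 0 (sortedD p)).sum = (sortedD p).sum := by
    have := cCL_sum (sortedD p) 0 0 lpos (by omega) (by omega)
    omega
  have hcoe_out : sortedD (↑(cCL 0 0 (sortedD p))) = cCL 0 0 (sortedD p) :=
    sortedD_coe _ osort
  refine ⟨⟨?_, ?_⟩, ?_, ?_, ?_⟩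
  · intro y hy
    exact opos y (Multiset.mem_coe.mp hy)
  · rw [Multiset.sum_coe, osum, lsum]
  · intro v hodd
    rw [Multiset.coe_count, Nat.even_iff]
    exact out_typeC (sortedD p) lpos lsort leven v (Nat.odd_iff.mp hodd)
  · intro k
    rw [hcoe_out]
    have h1 := out_take (sortedD p) lpos leven k
    omega
  · intro r hr hrC hdom k
    rw [hcoe_out]
    apply cCL_max (sortedD p) (sortedD r) lpos lsort leven
    · exact sortedD_pos r hr.1
    · exact sortedD_pairwise r
    · intro v hv
      have : Multiset.count v r = (sortedD r).count v := by
        conv_lhs => rw [← coe_sortedD r]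
        rw [Multiset.coe_count]
      rw [← this]
      exact Nat.even_iff.mp (hrC v (Nat.odd_iff.mpr hv))
    · rw [sortedD_sum, hr.2, lsum]
    · exact hdom

lemma collapse_eq_out (p : Multiset ℕ) (hpos : ∀ y ∈ p, 0 < y) (heven : p.sum % 2 = 0) :
    collapse .C p = ↑(cCL 0 0 (sortedD p)) := by
  have hc := isCollapse_out p hpos heven
  have hex : ∃ q, IsCollapse .C p q := ⟨_, hc⟩
  unfold collapse
  rw [dif_pos hex]
  exact collapse_unique hex.choose_spec hc


lemma mem_sortedD {y : ℕ} {q : Multiset ℕ} : y ∈ sortedD q ↔ y ∈ q := by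
  rw [← Multiset.mem_coe, coe_sortedD]

lemma minusOp_eq (q : Multiset ℕ) (hne : sortedD q ≠ []) (h2 : 2 ≤ (sortedD q).getLast hne) :
    minusOp q = ↑(decLast (sortedD q)) := by
  have hrev : q.sort (· ≤ ·) = (sortedD q).reverse := by
    unfold sortedD
    rw [List.reverse_reverse]
  have hdec : (sortedD q).reverse =
      (sortedD q).getLast hne :: (sortedD q).dropLast.reverse := by
    conv_lhs => rw [← List.dropLast_append_getLast hne]
    rw [List.reverse_append]
    simp
  unfold minusOp
  rw [hrev, hdec]
  show (if (sortedD q).getLast hne = 1 then ((sortedD q).dropLast.reverse : Multiset ℕ)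
      else ((sortedD q).getLast hne - 1) ::ₘ ↑((sortedD q).dropLast.reverse)) = _
  rw [if_neg (by omega), Multiset.coe_reverse, Multiset.cons_coe]
  exact Multiset.coe_eq_coe.mpr (decLast_perm _ hne).symm

lemma plusOp_eq (q : Multiset ℕ) (b : ℕ) (r : List ℕ) (h : sortedD q = b :: r) :
    plusOp q = ↑((b + 1) :: r) := by
  unfold plusOp
  rw [h]
  show ((b + 1) ::ₘ ↑r : Multiset ℕ) = _
  rw [Multiset.cons_coe]

end CollapseAux
end CollapseAuxSec

/-- Let `x` be a positive integer and `p` a partition of `2n`.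
If `|p_{>x}|` is even, then `p_C = (p_{>x})_C ⊔ (p_{≤x})_C`; if `|p_{>x}|` is odd,
then `p_C = ((p_{>x})^-)_C ⊔ ((p_{≤x})^+)_C`. -/
theorem collapseC_split (n x : ℕ) (hx : 0 < x)
    (p : Multiset ℕ) (hp : IsPartitionOf p (2 * n)) :
    (Even (p.filter (fun y => x < y)).sum →
      collapse .C p =
        collapse .C (p.filter (fun y => x < y)) +
          collapse .C (p.filter (fun y => y ≤ x))) ∧
    (Odd (p.filter (fun y => x < y)).sum →
      collapse .C p =
        collapse .C (minusOp (p.filter (fun y => x < y))) +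
          collapse .C (plusOp (p.filter (fun y => y ≤ x)))) := by
  classical
  obtain ⟨hppos, hpsum⟩ := hp
  set q1 := p.filter (fun y => x < y) with hq1def
  set q2 := p.filter (fun y => y ≤ x) with hq2def
  have hp1pos : ∀ y ∈ q1, 0 < y := fun y hy => hppos y (Multiset.mem_of_mem_filter hy)
  have hp2pos : ∀ y ∈ q2, 0 < y := fun y hy => hppos y (Multiset.mem_of_mem_filter hy)
  have hp1gt : ∀ y ∈ q1, x < y := fun y hy => (Multiset.mem_filter.mp hy).2
  have hp2le : ∀ y ∈ q2, y ≤ x := fun y hy => (Multiset.mem_filter.mp hy).2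
  have hsplit : q1 + q2 = p := by
    have h1 : q2 = p.filter (fun y => ¬ x < y) :=
      Multiset.filter_congr (fun y _ => not_lt.symm)
    rw [hq1def, h1, Multiset.filter_add_not]
  have hsum12 : q1.sum + q2.sum = p.sum := by
    rw [← Multiset.sum_add, hsplit]
  have hcross : ∀ a ∈ sortedD q1, ∀ b ∈ sortedD q2, a ≥ b := by
    intro a ha b hb
    have ha' : x < a := hp1gt a (CollapseAux.mem_sortedD.mp ha)
    have hb' : b ≤ x := hp2le b (CollapseAux.mem_sortedD.mp hb)
    omega
  have hpw : (sortedD q1 ++ sortedD q2).Pairwise (· ≥ ·) :=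
    List.pairwise_append.mpr ⟨CollapseAux.sortedD_pairwise q1,
      CollapseAux.sortedD_pairwise q2, hcross⟩
  have happ : sortedD p = sortedD q1 ++ sortedD q2 := by
    have hco : (↑(sortedD q1 ++ sortedD q2) : Multiset ℕ) = p := by
      have h0 : (↑(sortedD q1 ++ sortedD q2) : Multiset ℕ) = ↑(sortedD q1) + ↑(sortedD q2) := rfl
      rw [h0, CollapseAux.coe_sortedD, CollapseAux.coe_sortedD, hsplit]
    calc sortedD p = sortedD ↑(sortedD q1 ++ sortedD q2) := by rw [hco]
      _ = sortedD q1 ++ sortedD q2 := CollapseAux.sortedD_coe _ hpw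
  have hs1 : (sortedD q1).sum = q1.sum := CollapseAux.sortedD_sum q1
  have hs2 : (sortedD q2).sum = q2.sum := CollapseAux.sortedD_sum q2
  constructor
  · -- even case
    intro hE
    have h1 : q1.sum % 2 = 0 := Nat.even_iff.mp hE
    have h2 : q2.sum % 2 = 0 := by omega
    rw [CollapseAux.collapse_eq_out p hppos (by omega),
      CollapseAux.collapse_eq_out q1 hp1pos (by omega),
      CollapseAux.collapse_eq_out q2 hp2pos (by omega), happ,
      CollapseAux.cCL_append (sortedD q2) (sortedD q1) 0 0
        (CollapseAux.sortedD_pos q1 hp1pos) (by omega) (by omega),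
      CollapseAux.cCL_parity (sortedD q2) 0 (0 + (sortedD q1).sum) 0 (by omega)]
    rfl
  · -- odd case
    intro hO
    have h1 : q1.sum % 2 = 1 := Nat.odd_iff.mp hO
    have h2 : q2.sum % 2 = 1 := by omega
    have hl1ne : sortedD q1 ≠ [] := by
      intro h
      rw [h] at hs1
      simp at hs1
      omega
    have hl2ne : sortedD q2 ≠ [] := by
      intro h
      rw [h] at hs2
      simp at hs2
      omega
    obtain ⟨b, r, heq⟩ := List.exists_cons_of_ne_nil hl2ne
    have hbx : b ≤ x := hp2le b (CollapseAux.mem_sortedD.mp (by rw [heq]; simp))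
    have hheadI : (sortedD q2).headI = b := by rw [heq]; rfl
    have hgt : ∀ y ∈ sortedD q1, (sortedD q2).headI < y := by
      intro y hy
      rw [hheadI]
      have : x < y := hp1gt y (CollapseAux.mem_sortedD.mp hy)
      omega
    have hglast : 2 ≤ (sortedD q1).getLast hl1ne := by
      have hmem := List.getLast_mem hl1ne
      have := hp1gt _ (CollapseAux.mem_sortedD.mp hmem)
      omega
    have hminus : minusOp q1 = ↑(CollapseAux.decLast (sortedD q1)) :=
      CollapseAux.minusOp_eq q1 hl1ne hglast
    have hdlpair := CollapseAux.decLast_pairwise _ (CollapseAux.sortedD_pairwise q1)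
    have hdlpos := CollapseAux.decLast_pos _ hl1ne (CollapseAux.sortedD_pos q1 hp1pos) hglast
    have hdlsum : (CollapseAux.decLast (sortedD q1)).sum = (sortedD q1).sum - 1 :=
      CollapseAux.decLast_sum _ hl1ne (by omega)
    have hsort_minus : sortedD (minusOp q1) = CollapseAux.decLast (sortedD q1) := by
      rw [hminus, CollapseAux.sortedD_coe _ hdlpair]
    have hminpos : ∀ y ∈ minusOp q1, 0 < y := by
      rw [hminus]
      intro y hy
      exact hdlpos y (Multiset.mem_coe.mp hy)
    have hminsum : (minusOp q1).sum = q1.sum - 1 := by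
      rw [hminus, Multiset.sum_coe, hdlsum, hs1]
    have hplus : plusOp q2 = ↑((b + 1) :: r) := CollapseAux.plusOp_eq q2 b r heq
    have hq2pair : (b :: r).Pairwise (· ≥ ·) := by
      rw [← heq]; exact CollapseAux.sortedD_pairwise q2
    have hp2pair : ((b + 1) :: r).Pairwise (· ≥ ·) := by
      rw [List.pairwise_cons]
      refine ⟨fun y hy => ?_, (List.pairwise_cons.mp hq2pair).2⟩
      have := (List.pairwise_cons.mp hq2pair).1 y hy
      omega
    have hsort_plus : sortedD (plusOp q2) = (b + 1) :: r := by
      rw [hplus, CollapseAux.sortedD_coe _ hp2pair]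
    have hpluspos : ∀ y ∈ plusOp q2, 0 < y := by
      rw [hplus]
      intro y hy
      rcases List.mem_cons.mp (Multiset.mem_coe.mp hy) with rfl | hyr
      · omega
      · exact hp2pos y (CollapseAux.mem_sortedD.mp (by rw [heq]; simp [hyr]))
    have hplussum : (plusOp q2).sum = q2.sum + 1 := by
      rw [hplus, Multiset.sum_coe]
      have hbr : (b :: r).sum = q2.sum := by rw [← heq]; exact hs2
      simp only [List.sum_cons] at hbr ⊢
      omega
    rw [CollapseAux.collapse_eq_out p hppos (by omega),
      CollapseAux.collapse_eq_out _ hminpos (by omega),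
      CollapseAux.collapse_eq_out _ hpluspos (by omega),
      happ, hsort_minus, hsort_plus,
      CollapseAux.cCL_split_odd (sortedD q1) hl1ne 0 0 (sortedD q2)
        (CollapseAux.sortedD_pairwise q1) hgt (by omega) (by omega),
      heq,
      CollapseAux.cCL_plus b (0 + (sortedD q1).sum) r (by omega)
        (CollapseAux.headI_le hq2pair)]
    rfl
end
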